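/- arXiv:1904.04906 — 9 statements merged into one kernel-verified Lean document; each statement's English description precedes it below -/
import Mathlib

section
/- Let X be a countable metrizable space. Then C_p(X) is countable dense homogeneous if and only if X is discrete. -/
set_option maxHeartbeats 1000000

open Filter Topology Set

private lemma rat_Ioo_infinite {a b : ℝ} (hab : a < b) :
    {q : ℚ | a < (q:ℝ) ∧ (q:ℝ) < b}.Infinite := by
  intro hfin
  obtain ⟨q0, hq0a, hq0b⟩ := exists_rat_btwn hab
  obtain ⟨qm, hqm, hmax⟩ := Set.Finite.exists_maximalFor id _ hfin ⟨q0, hq0a, hq0b⟩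
  obtain ⟨q', hq'1, hq'2⟩ := exists_rat_btwn hqm.2
  have hq'S : q' ∈ {q : ℚ | a < (q:ℝ) ∧ (q:ℝ) < b} := ⟨lt_trans hqm.1 hq'1, hq'2⟩
  have hlt : qm < q' := by exact_mod_cast hq'1
  have := hmax hq'S (le_of_lt hlt)
  simp only [id] at this
  exact absurd this (not_le_of_gt hlt)

private lemma exists_pos_le_dist {Y : Type*} [MetricSpace Y] {F : Set Y} (hF : F.Finite)
    {p : Y} (hp : p ∉ F) : ∃ r > 0, ∀ z ∈ F, r ≤ dist p z := by
  rcases F.eq_empty_or_nonempty with h | h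
  · exact ⟨1, one_pos, by simp [h]⟩
  · exact ⟨Metric.infDist p F, (hF.isClosed.notMem_iff_infDist_pos h).1 hp,
      fun z hz => Metric.infDist_le_dist_of_mem hz⟩

private lemma prod_sub_prod_abs_le {ι : Type*} (s : Finset ι) (f g : ι → ℝ)
    (hf : ∀ i ∈ s, f i ∈ Set.Icc (0:ℝ) 1) (hg : ∀ i ∈ s, g i ∈ Set.Icc (0:ℝ) 1) :
    |∏ i ∈ s, f i - ∏ i ∈ s, g i| ≤ ∑ i ∈ s, |f i - g i| := by
  classical
  induction s using Finset.induction with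
  | empty => simp
  | insert _ _ hx ih =>
      rename_i a s
      rw [Finset.prod_insert hx, Finset.prod_insert hx, Finset.sum_insert hx]
      have hPf : |∏ i ∈ s, f i| ≤ 1 := by
        rw [abs_of_nonneg (Finset.prod_nonneg fun i hi => (hf i (Finset.mem_insert_of_mem hi)).1)]
        exact Finset.prod_le_one (fun i hi => (hf i (Finset.mem_insert_of_mem hi)).1)
          (fun i hi => (hf i (Finset.mem_insert_of_mem hi)).2)
      have hga : |g a| ≤ 1 := by
        rw [abs_of_nonneg (hg a (Finset.mem_insert_self a s)).1]
        exact (hg a (Finset.mem_insert_self a s)).2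
      have key : f a * ∏ i ∈ s, f i - g a * ∏ i ∈ s, g i
          = (f a - g a) * ∏ i ∈ s, f i + g a * (∏ i ∈ s, f i - ∏ i ∈ s, g i) := by ring
      rw [key]
      calc |(f a - g a) * ∏ i ∈ s, f i + g a * (∏ i ∈ s, f i - ∏ i ∈ s, g i)|
          ≤ |(f a - g a) * ∏ i ∈ s, f i| + |g a * (∏ i ∈ s, f i - ∏ i ∈ s, g i)| := abs_add_le _ _
        _ = |f a - g a| * |∏ i ∈ s, f i| + |g a| * |∏ i ∈ s, f i - ∏ i ∈ s, g i| := by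
            rw [abs_mul, abs_mul]
        _ ≤ |f a - g a| * 1 + 1 * |∏ i ∈ s, f i - ∏ i ∈ s, g i| := by
            gcongr
        _ ≤ |f a - g a| + ∑ i ∈ s, |f i - g i| := by
            rw [mul_one, one_mul]
            exact add_le_add le_rfl (ih (fun i hi => hf i (Finset.mem_insert_of_mem hi))
              (fun i hi => hg i (Finset.mem_insert_of_mem hi)))

private lemma exists_eta {X : Type*} (I : Finset X) (u : X → Set ℝ) (a : X → ℝ)
    (h : ∀ x ∈ I, IsOpen (u x) ∧ a x ∈ u x) :
    ∃ η > (0:ℝ), ∀ x ∈ I, Metric.ball (a x) η ⊆ u x := by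
  classical
  induction I using Finset.induction with
  | empty => exact ⟨1, one_pos, by simp⟩
  | insert _ _ hx ih =>
    rename_i x I
    obtain ⟨η, hη, hball⟩ := ih (fun y hy => h y (Finset.mem_insert_of_mem hy))
    obtain ⟨hopen, hmem⟩ := h x (Finset.mem_insert_self x I)
    obtain ⟨η', hη', hb'⟩ := Metric.isOpen_iff.1 hopen _ hmem
    refine ⟨min η η', lt_min hη hη', fun y hy => ?_⟩
    rcases Finset.mem_insert.1 hy with rfl | hy
    · exact (Metric.ball_subset_ball (min_le_right _ _)).trans hb'
    · exact (Metric.ball_subset_ball (min_le_left _ _)).trans (hball y hy)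

private lemma slh_pi {X : Type*} (a : X → ℝ) (W : Set (X → ℝ)) (hW : IsOpen W) (haW : a ∈ W) :
    ∃ V : Set (X → ℝ), IsOpen V ∧ a ∈ V ∧ ∀ b ∈ V,
      ∃ g : (X → ℝ) ≃ₜ (X → ℝ), g a = b ∧ ∀ y, y ∉ W → g y = y := by
  classical
  obtain ⟨I, u, hu, hsub⟩ := isOpen_pi_iff.1 hW a haW
  obtain ⟨η, hη, hballu⟩ := exists_eta I u a hu
  set N : ℕ := I.card with hNdef
  have hNpos : (0:ℝ) < (N:ℝ) + 1 := by positivity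
  set c : ℝ := η / (8 * ((N:ℝ) + 1)) with hcdef
  have hc : (0:ℝ) < c := by rw [hcdef]; positivity
  refine ⟨⋂ x ∈ I, (fun y : X → ℝ => y x) ⁻¹' Metric.ball (a x) c,
    isOpen_biInter_finset fun x _ => Metric.isOpen_ball.preimage (continuous_apply x), ?_, ?_⟩
  · simp only [mem_iInter, mem_preimage, Metric.mem_ball, dist_self]
    exact fun x _ => hc
  intro b hb
  simp only [mem_iInter, mem_preimage, Metric.mem_ball] at hb
  have hbc : ∀ x ∈ I, |b x - a x| ≤ c := by
    intro x hx
    have := hb x hx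
    rw [Real.dist_eq] at this
    exact le_of_lt this
  set v : X → ℝ := fun x => b x - a x with hvdef
  set θ : ℝ → ℝ := fun s => max 0 (min 1 (2 - 4 * s / η)) with hθdef
  have θ_mem : ∀ s, θ s ∈ Set.Icc (0:ℝ) 1 :=
    fun s => ⟨le_max_left _ _, max_le zero_le_one (min_le_left _ _)⟩
  have θ_zero : θ 0 = 1 := by
    simp only [hθdef, mul_zero, zero_div, sub_zero]
    norm_num
  have θ_eq_zero : ∀ s : ℝ, η / 2 ≤ s → θ s = 0 := by
    intro s hs
    have h2 : 2 - 4 * s / η ≤ 0 := by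
      rw [sub_nonpos, le_div_iff₀ hη]; linarith
    exact max_eq_left ((min_le_right _ _).trans h2)
  have θ_lip : ∀ s t : ℝ, |θ s - θ t| ≤ (4 / η) * |s - t| := by
    intro s t
    have h1 : |θ s - θ t| ≤ |min 1 (2 - 4 * s / η) - min 1 (2 - 4 * t / η)| := by
      rw [hθdef]
      simpa [max_comm] using abs_max_sub_max_le_abs (min 1 (2 - 4*s/η)) (min 1 (2 - 4*t/η)) 0
    have h2 := abs_min_sub_min_le_max (1:ℝ) (2 - 4*s/η) 1 (2 - 4*t/η)
    have h3 : (2 - 4*s/η) - (2 - 4*t/η) = (4/η) * (t - s) := by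
      field_simp
      ring
    calc |θ s - θ t| ≤ max |(1:ℝ) - 1| |(2 - 4*s/η) - (2 - 4*t/η)| := h1.trans h2
      _ = |(2 - 4*s/η) - (2 - 4*t/η)| := by
          rw [sub_self, abs_zero]; exact max_eq_right (abs_nonneg _)
      _ = (4/η) * |s - t| := by
          rw [h3, abs_mul, abs_sub_comm t s, abs_of_pos (by positivity)]
  set lam : (X → ℝ) → ℝ := fun y => ∏ x ∈ I, θ |y x - a x| with hlamdef
  have lam_mem : ∀ y, lam y ∈ Set.Icc (0:ℝ) 1 := fun y =>
    ⟨Finset.prod_nonneg fun x _ => (θ_mem _).1,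
     Finset.prod_le_one (fun x _ => (θ_mem _).1) (fun x _ => (θ_mem _).2)⟩
  have lam_a : lam a = 1 := by
    rw [hlamdef]
    exact Finset.prod_eq_one fun x _ => by rw [sub_self, abs_zero, θ_zero]
  have lam_diff : ∀ y z : X → ℝ, |lam y - lam z| ≤ ∑ x ∈ I, (4/η) * |y x - z x| := by
    intro y z
    refine (prod_sub_prod_abs_le I _ _ (fun x _ => θ_mem _) (fun x _ => θ_mem _)).trans ?_
    refine Finset.sum_le_sum fun x _ => ?_
    refine (θ_lip _ _).trans ?_
    have h4 : |(|y x - a x| - |z x - a x|)| ≤ |y x - z x| := by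
      have := abs_abs_sub_abs_le_abs_sub (y x - a x) (z x - a x)
      simpa using this
    gcongr
  have hcontraux : ((N:ℝ)) * ((4/η) * c) ≤ 1/2 := by
    have h1 : (4/η) * c = 1 / (2*((N:ℝ)+1)) := by
      rw [hcdef]
      field_simp
      ring
    rw [h1]
    rw [mul_one_div, div_le_div_iff₀ (by positivity) two_pos]
    push_cast
    linarith
  have psi_lip : ∀ (z : X → ℝ) (t t' : ℝ),
      |lam (z - t • v) - lam (z - t' • v)| ≤ (1/2) * |t - t'| := by
    intro z t t'
    refine (lam_diff _ _).trans ?_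
    have h5 : ∀ x ∈ I, (4/η) * |(z - t • v) x - (z - t' • v) x| ≤ (4/η) * (c * |t - t'|) := by
      intro x hx
      have h6 : (z - t • v) x - (z - t' • v) x = (t' - t) * v x := by
        simp [Pi.sub_apply, Pi.smul_apply, smul_eq_mul]
        ring
      rw [h6, abs_mul]
      have h7 : |t' - t| = |t - t'| := abs_sub_comm _ _
      rw [h7]
      have := hbc x hx
      have hvx : |v x| ≤ c := this
      calc (4/η) * (|t - t'| * |v x|) ≤ (4/η) * (|t - t'| * c) := by
            gcongr
        _ = (4/η) * (c * |t - t'|) := by ring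
    refine (Finset.sum_le_sum h5).trans ?_
    rw [Finset.sum_const, nsmul_eq_mul]
    calc (N:ℝ) * ((4/η) * (c * |t-t'|)) = ((N:ℝ) * ((4/η) * c)) * |t - t'| := by ring
      _ ≤ (1/2) * |t - t'| := by gcongr
  have hcontr : ∀ z : X → ℝ, ContractingWith (1/2 : NNReal) (fun t : ℝ => lam (z - t • v)) := by
    intro z
    constructor
    · rw [← NNReal.coe_lt_coe]
      norm_num
    · refine LipschitzWith.of_dist_le_mul fun t t' => ?_
      have := psi_lip z t t'
      rw [Real.dist_eq, Real.dist_eq]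
      refine this.trans (le_of_eq ?_)
      norm_num
  set τ : (X → ℝ) → ℝ := fun z => ContractingWith.fixedPoint _ (hcontr z) with hτdef
  have τ_fix : ∀ z, lam (z - τ z • v) = τ z := fun z => (hcontr z).fixedPoint_isFixedPt
  have τ_unique : ∀ z t, lam (z - t • v) = t → τ z = t := by
    intro z t ht
    have h1 := psi_lip z (τ z) t
    rw [τ_fix z, ht] at h1
    have h2 := abs_nonneg (τ z - t)
    have h3 : |τ z - t| = 0 := by linarith
    exact sub_eq_zero.1 (abs_eq_zero.1 h3)
  set G : (X → ℝ) → (X → ℝ) := fun y => y + lam y • v with hGdef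
  set Gi : (X → ℝ) → (X → ℝ) := fun z => z - τ z • v with hGidef
  have left_inv : ∀ y, Gi (G y) = y := by
    intro y
    have h1 : G y - lam y • v = y := by rw [hGdef]; simp
    have h2 : τ (G y) = lam y := τ_unique (G y) (lam y) (by rw [h1])
    rw [hGidef]
    simp only [h2, h1]
  have right_inv : ∀ z, G (Gi z) = z := by
    intro z
    have h2 : lam (Gi z) = τ z := τ_fix z
    rw [hGdef]
    simp only [h2, hGidef]
    simp [τ_fix z]
  have θ_cont : Continuous θ := by
    rw [hθdef]
    exact continuous_const.max (continuous_const.min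
      (continuous_const.sub ((continuous_const.mul continuous_id).div_const η)))
  have lam_cont : Continuous lam := by
    rw [hlamdef]
    exact continuous_finset_prod _ fun x _ =>
      θ_cont.comp (((continuous_apply x).sub continuous_const).abs)
  have G_cont : Continuous G := continuous_id.add (lam_cont.smul continuous_const)
  have τ_diff : ∀ z z' : X → ℝ, |τ z - τ z'| ≤ 2 * ∑ x ∈ I, (4/η) * |z x - z' x| := by
    intro z z'
    have h1 : |τ z - τ z'| = |lam (z - τ z • v) - lam (z' - τ z' • v)| := by
      rw [τ_fix, τ_fix]
    have h2 := abs_sub_le (lam (z - τ z • v)) (lam (z' - τ z • v)) (lam (z' - τ z' • v))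
    have h3 : |lam (z - τ z • v) - lam (z' - τ z • v)| ≤ ∑ x ∈ I, (4/η) * |z x - z' x| := by
      refine (lam_diff _ _).trans (le_of_eq (Finset.sum_congr rfl fun x _ => ?_))
      congr 1
      congr 1
      simp [Pi.sub_apply]
    have h4 := psi_lip z' (τ z) (τ z')
    rw [h1]
    linarith
  have τ_cont : Continuous τ := by
    rw [continuous_iff_continuousAt]
    intro z₀
    rw [ContinuousAt, Metric.tendsto_nhds]
    intro ε hε
    set ε' : ℝ := ε * η / (8 * ((N:ℝ)+1)) with hε'def
    have hε' : 0 < ε' := by rw [hε'def]; positivity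
    have hU : (⋂ x ∈ I, (fun y : X → ℝ => y x) ⁻¹' Metric.ball (z₀ x) ε') ∈ 𝓝 z₀ := by
      refine IsOpen.mem_nhds (isOpen_biInter_finset fun x _ =>
        Metric.isOpen_ball.preimage (continuous_apply x)) ?_
      simp only [mem_iInter, mem_preimage, Metric.mem_ball, dist_self]
      exact fun x _ => hε'
    refine Filter.eventually_of_mem hU ?_
    intro z hz
    simp only [mem_iInter, mem_preimage, Metric.mem_ball] at hz
    rw [Real.dist_eq]
    have h1 := τ_diff z z₀
    have h2 : ∑ x ∈ I, (4/η) * |z x - z₀ x| ≤ ∑ x ∈ I, (4/η) * ε' := by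
      refine Finset.sum_le_sum fun x hx => ?_
      have := hz x hx
      rw [Real.dist_eq] at this
      gcongr
    rw [Finset.sum_const, nsmul_eq_mul] at h2
    have h3 : 2 * ((N:ℝ) * ((4/η) * ε')) = ε * ((N:ℝ) / ((N:ℝ)+1)) := by
      rw [hε'def]
      field_simp
      ring
    have h4 : ε * ((N:ℝ) / ((N:ℝ)+1)) < ε := by
      have h5 : (N:ℝ) / ((N:ℝ)+1) < 1 := by
        rw [div_lt_one hNpos]
        linarith
      calc ε * ((N:ℝ)/((N:ℝ)+1)) < ε * 1 := by
            exact mul_lt_mul_of_pos_left h5 hε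
        _ = ε := mul_one ε
    calc |τ z - τ z₀| ≤ 2 * ∑ x ∈ I, (4/η) * |z x - z₀ x| := h1
      _ ≤ 2 * ((N:ℝ) * ((4/η) * ε')) := by linarith
      _ = ε * ((N:ℝ)/((N:ℝ)+1)) := h3
      _ < ε := h4
  have Gi_cont : Continuous Gi := continuous_id.sub (τ_cont.smul continuous_const)
  refine ⟨Homeomorph.mk ⟨G, Gi, left_inv, right_inv⟩ G_cont Gi_cont, ?_, ?_⟩
  · show G a = b
    rw [hGdef]
    simp only [lam_a, one_smul]
    funext x
    simp [hvdef]
  · intro y hyW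
    show G y = y
    by_cases hl : lam y = 0
    · rw [hGdef]; simp [hl]
    · exfalso
      apply hyW
      apply hsub
      intro x hx
      have hθx : θ |y x - a x| ≠ 0 := by
        intro h0
        exact hl (Finset.prod_eq_zero hx h0)
      have hlt : |y x - a x| < η / 2 := by
        by_contra hge
        exact hθx (θ_eq_zero _ (le_of_not_gt hge))
      refine hballu x hx ?_
      rw [Metric.mem_ball, Real.dist_eq]
      linarith

private structure BFSt (Y : Type*) [TopologicalSpace Y] (D E : Set Y) (d e : ℕ → Y) where
  h : Y ≃ₜ Y
  A : Finset ℕ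
  B : Finset ℕ
  hA : ∀ i ∈ A, h (d i) ∈ E
  hB : ∀ j ∈ B, h.symm (e j) ∈ D

private lemma bf_step {Y : Type*} [MetricSpace Y] {D E : Set Y} {d e : ℕ → Y}
    (hE : Dense E) (heE : ∀ j, e j ∈ E)
    (slh : ∀ (a : Y) (ε : ℝ), 0 < ε → ∃ δ > 0, ∀ b, dist a b < δ →
      ∃ g : Y ≃ₜ Y, g a = b ∧ ∀ y, ε ≤ dist y a → g y = y)
    (h : Y ≃ₜ Y) (A B : Finset ℕ)
    (hA : ∀ i ∈ A, h (d i) ∈ E) (hB : ∀ j ∈ B, h.symm (e j) ∈ D)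
    (i m : ℕ) :
    ∃ (h' : Y ≃ₜ Y) (A' B' : Finset ℕ),
      (∀ k ∈ A', h' (d k) ∈ E) ∧ (∀ j ∈ B', h'.symm (e j) ∈ D) ∧
      A ⊆ A' ∧ B ⊆ B' ∧ i ∈ A' ∧
      (∀ k ∈ A, h' (d k) = h (d k)) ∧ (∀ j ∈ B, h'.symm (e j) = h.symm (e j)) ∧
      (∀ y, dist (h' y) (h y) ≤ (1/2:ℝ)^m) ∧ (∀ y, dist (h'.symm y) (h.symm y) ≤ (1/2:ℝ)^m) := by
  classical
  by_cases hp : h (d i) ∈ E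
  · refine ⟨h, insert i A, B, ?_, hB, Finset.subset_insert _ _, subset_rfl,
      Finset.mem_insert_self _ _, fun k _ => rfl, fun j _ => rfl, ?_, ?_⟩
    · intro k hk
      rcases Finset.mem_insert.1 hk with rfl | hkA
      · exact hp
      · exact hA k hkA
    · intro y; rw [dist_self]; positivity
    · intro y; rw [dist_self]; positivity
  · set p := h (d i) with hpdef
    set T : Set Y := (fun k => h (d k)) '' ↑A ∪ e '' ↑B with hTdef
    have hTfin : T.Finite := ((A.finite_toSet).image _).union ((B.finite_toSet).image _)
    have hTE : T ⊆ E := by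
      rintro z (⟨k, hk, rfl⟩ | ⟨j, hj, rfl⟩)
      · exact hA k hk
      · exact heE j
    have hpT : p ∉ T := fun hz => hp (hTE hz)
    obtain ⟨r₁, hr₁, hr₁d⟩ := exists_pos_le_dist hTfin hpT
    obtain ⟨ε₂, hε₂, hcball⟩ := Metric.continuousAt_iff.1
      (h.symm.continuous.continuousAt (x := p)) ((1/2:ℝ)^(m+1)) (by positivity)
    set ε : ℝ := min (min ((1/2:ℝ)^(m+1)) r₁) ε₂ with hεdef
    have hεpos : 0 < ε := lt_min (lt_min (by positivity) hr₁) hε₂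
    have hε1 : ε ≤ (1/2:ℝ)^(m+1) := (min_le_left _ _).trans (min_le_left _ _)
    have hεr : ε ≤ r₁ := (min_le_left _ _).trans (min_le_right _ _)
    have hεε₂ : ε ≤ ε₂ := min_le_right _ _
    obtain ⟨δ, hδ, hslh⟩ := slh p ε hεpos
    set δ' : ℝ := min δ ε with hδ'def
    have hδ'pos : 0 < δ' := lt_min hδ hεpos
    obtain ⟨e', he'mem⟩ := dense_iff_inter_open.1 hE (Metric.ball p δ')
      Metric.isOpen_ball ⟨p, Metric.mem_ball_self hδ'pos⟩
    obtain ⟨he'ball, he'E⟩ := he'mem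
    obtain ⟨g, hgp, hgfix⟩ := hslh e' (by
      rw [Metric.mem_ball] at he'ball
      rw [dist_comm]
      exact lt_of_lt_of_le he'ball (min_le_left _ _))
    have moved_ball : ∀ z, g z ≠ z → dist z p < ε :=
      fun z hz => lt_of_not_ge (fun hle => hz (hgfix z hle))
    have moved_ball' : ∀ z, g z ≠ z → dist (g z) p < ε := by
      intro z hz
      by_contra hge
      have h1 : g (g z) = g z := hgfix _ (le_of_not_gt hge)
      exact hz (g.injective h1)
    have Tfix : ∀ z ∈ T, g z = z := by
      intro z hz
      refine hgfix z ?_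
      rw [dist_comm]
      exact hεr.trans (hr₁d z hz)
    refine ⟨h.trans g, insert i A, B, ?_, ?_, Finset.subset_insert _ _, subset_rfl,
      Finset.mem_insert_self _ _, ?_, ?_, ?_, ?_⟩
    · intro k hk
      rcases Finset.mem_insert.1 hk with rfl | hkA
      · rw [Homeomorph.trans_apply, ← hpdef, hgp]
        exact he'E
      · rw [Homeomorph.trans_apply, Tfix _ (Or.inl ⟨k, hkA, rfl⟩)]
        exact hA k hkA
    · intro j hj
      have hfix := Tfix _ (Or.inr ⟨j, hj, rfl⟩)
      have hsymm : g.symm (e j) = e j := by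
        conv_lhs => rw [← hfix]
        exact g.symm_apply_apply _
      rw [Homeomorph.symm_trans_apply, hsymm]
      exact hB j hj
    · intro k hkA
      rw [Homeomorph.trans_apply, Tfix _ (Or.inl ⟨k, hkA, rfl⟩)]
    · intro j hj
      have hfix := Tfix _ (Or.inr ⟨j, hj, rfl⟩)
      have hsymm : g.symm (e j) = e j := by
        conv_lhs => rw [← hfix]
        exact g.symm_apply_apply _
      rw [Homeomorph.symm_trans_apply, hsymm]
    · intro y
      rw [Homeomorph.trans_apply]
      by_cases hz : g (h y) = h y
      · rw [hz, dist_self]; positivity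
      · refine le_of_lt ?_
        calc dist (g (h y)) (h y) ≤ dist (g (h y)) p + dist p (h y) := dist_triangle _ _ _
          _ < ε + ε := add_lt_add (moved_ball' _ hz) (by
              rw [dist_comm]; exact moved_ball _ hz)
          _ ≤ (1/2:ℝ)^(m+1) + (1/2:ℝ)^(m+1) := add_le_add hε1 hε1
          _ = (1/2:ℝ)^m := by ring
    · intro y
      rw [Homeomorph.symm_trans_apply]
      by_cases hz : g.symm y = y
      · rw [hz, dist_self]; positivity
      · have hw : g (g.symm y) ≠ g.symm y := by
          rw [g.apply_symm_apply]
          exact fun hc => hz hc.symm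
        have h1 : dist (g.symm y) p < ε := moved_ball _ hw
        have h2 : dist y p < ε := by
          have := moved_ball' _ hw
          rwa [g.apply_symm_apply] at this
        have b1 := hcball (lt_of_lt_of_le h1 hεε₂)
        have b2 := hcball (lt_of_lt_of_le h2 hεε₂)
        refine le_of_lt ?_
        calc dist (h.symm (g.symm y)) (h.symm y)
            ≤ dist (h.symm (g.symm y)) (h.symm p) + dist (h.symm p) (h.symm y) :=
              dist_triangle _ _ _
          _ < (1/2:ℝ)^(m+1) + (1/2:ℝ)^(m+1) := add_lt_add b1 (by rw [dist_comm]; exact b2)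
          _ = (1/2:ℝ)^m := by ring

private lemma bf_stepfull {Y : Type*} [MetricSpace Y] {D E : Set Y} {d e : ℕ → Y}
    (hD : Dense D) (hE : Dense E) (hdD : ∀ i, d i ∈ D) (heE : ∀ j, e j ∈ E)
    (slh : ∀ (a : Y) (ε : ℝ), 0 < ε → ∃ δ > 0, ∀ b, dist a b < δ →
      ∃ g : Y ≃ₜ Y, g a = b ∧ ∀ y, ε ≤ dist y a → g y = y)
    (n : ℕ) (s : BFSt Y D E d e) :
    ∃ t : BFSt Y D E d e,
      s.A ⊆ t.A ∧ s.B ⊆ t.B ∧ (Even n → n/2 ∈ t.A) ∧ (¬ Even n → n/2 ∈ t.B) ∧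
      (∀ k ∈ s.A, t.h (d k) = s.h (d k)) ∧ (∀ j ∈ s.B, t.h.symm (e j) = s.h.symm (e j)) ∧
      (∀ y, dist (t.h y) (s.h y) ≤ (1/2:ℝ)^n) ∧
      (∀ y, dist (t.h.symm y) (s.h.symm y) ≤ (1/2:ℝ)^n) := by
  by_cases hn : Even n
  · obtain ⟨h', A', B', i1, i2, sA, sB, mem, stA, stB, d1, d2⟩ :=
      bf_step hE heE slh s.h s.A s.B s.hA s.hB (n/2) n
    exact ⟨⟨h', A', B', i1, i2⟩, sA, sB, fun _ => mem, fun hc => absurd hn hc, stA, stB, d1, d2⟩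
  · obtain ⟨h', B', A', i1, i2, sB, sA, mem, stB, stA, d1, d2⟩ :=
      bf_step (D := E) (E := D) (d := e) (e := d) hD hdD slh s.h.symm s.B s.A s.hB
        (by intro j hj; rw [Homeomorph.symm_symm]; exact s.hA j hj) (n/2) n
    refine ⟨⟨h'.symm, A', B', i2, ?_⟩, sA, sB, fun hc => absurd hc hn, fun _ => mem,
      ?_, ?_, ?_, ?_⟩
    · intro j hj
      rw [Homeomorph.symm_symm]
      exact i1 j hj
    · intro k hk
      have := stA k hk
      rwa [Homeomorph.symm_symm] at this
    · intro j hj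
      show h'.symm.symm (e j) = s.h.symm (e j)
      rw [Homeomorph.symm_symm]
      exact stB j hj
    · intro y
      have := d2 y
      rwa [Homeomorph.symm_symm] at this
    · intro y
      show dist (h'.symm.symm y) (s.h.symm.symm.symm y) ≤ _
      rw [Homeomorph.symm_symm, Homeomorph.symm_symm]
      exact d1 y

private theorem cdh_backforth {Y : Type*} [MetricSpace Y] [CompleteSpace Y]
    (slh : ∀ (a : Y) (ε : ℝ), 0 < ε → ∃ δ > 0, ∀ b, dist a b < δ →
      ∃ g : Y ≃ₜ Y, g a = b ∧ ∀ y, ε ≤ dist y a → g y = y)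
    (D E : Set Y) (hD : Dense D) (hE : Dense E)
    (hDne : D.Nonempty) (hEne : E.Nonempty)
    (hDc : D.Countable) (hEc : E.Countable) :
    ∃ h : Y ≃ₜ Y, h '' D = E := by
  classical
  haveI : Nonempty Y := ⟨hDne.some⟩
  obtain ⟨d, hd⟩ := hDc.exists_eq_range hDne
  obtain ⟨e, he⟩ := hEc.exists_eq_range hEne
  have hdD : ∀ i, d i ∈ D := fun i => hd ▸ mem_range_self i
  have heE : ∀ j, e j ∈ E := fun j => he ▸ mem_range_self j
  let seq : ℕ → BFSt Y D E d e := fun n =>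
    Nat.rec ⟨Homeomorph.refl Y, ∅, ∅, by simp, by simp⟩
      (fun n s => (bf_stepfull hD hE hdD heE slh n s).choose) n
  have hsub : ∀ n, (seq n).A ⊆ (seq (n+1)).A ∧ (seq n).B ⊆ (seq (n+1)).B ∧
      (Even n → n/2 ∈ (seq (n+1)).A) ∧ (¬Even n → n/2 ∈ (seq (n+1)).B) ∧
      (∀ k ∈ (seq n).A, (seq (n+1)).h (d k) = (seq n).h (d k)) ∧
      (∀ j ∈ (seq n).B, (seq (n+1)).h.symm (e j) = (seq n).h.symm (e j)) ∧
      (∀ y, dist ((seq (n+1)).h y) ((seq n).h y) ≤ (1/2:ℝ)^n) ∧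
      (∀ y, dist ((seq (n+1)).h.symm y) ((seq n).h.symm y) ≤ (1/2:ℝ)^n) :=
    fun n => (bf_stepfull hD hE hdD heE slh n (seq n)).choose_spec
  have hAmono : ∀ {n m : ℕ}, n ≤ m → (seq n).A ⊆ (seq m).A := by
    intro n m hnm
    induction m, hnm using Nat.le_induction with
    | base => exact subset_rfl
    | succ m hm ih => exact ih.trans (hsub m).1
  have hBmono : ∀ {n m : ℕ}, n ≤ m → (seq n).B ⊆ (seq m).B := by
    intro n m hnm
    induction m, hnm using Nat.le_induction with
    | base => exact subset_rfl
    | succ m hm ih => exact ih.trans (hsub m).2.1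
  have hstabA : ∀ {n m : ℕ}, n ≤ m → ∀ k ∈ (seq n).A, (seq m).h (d k) = (seq n).h (d k) := by
    intro n m hnm
    induction m, hnm using Nat.le_induction with
    | base => intro k _; rfl
    | succ m hm ih =>
        intro k hk
        rw [(hsub m).2.2.2.2.1 k (hAmono hm hk), ih k hk]
  have hstabB : ∀ {n m : ℕ}, n ≤ m →
      ∀ j ∈ (seq n).B, (seq m).h.symm (e j) = (seq n).h.symm (e j) := by
    intro n m hnm
    induction m, hnm using Nat.le_induction with
    | base => intro j _; rfl
    | succ m hm ih =>
        intro j hj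
        rw [(hsub m).2.2.2.2.2.1 j (hBmono hm hj), ih j hj]
  have hgeo : ∀ (y : Y) (n m : ℕ), n ≤ m →
      dist ((seq m).h y) ((seq n).h y) ≤ 2*((1/2:ℝ)^n - (1/2:ℝ)^m) := by
    intro y n m hnm
    induction m, hnm using Nat.le_induction with
    | base => simp
    | succ m hm ih =>
        calc dist ((seq (m+1)).h y) ((seq n).h y)
            ≤ dist ((seq (m+1)).h y) ((seq m).h y) + dist ((seq m).h y) ((seq n).h y) :=
              dist_triangle _ _ _
          _ ≤ (1/2:ℝ)^m + 2*((1/2:ℝ)^n - (1/2:ℝ)^m) :=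
              add_le_add ((hsub m).2.2.2.2.2.2.1 y) ih
          _ = 2*((1/2:ℝ)^n - (1/2:ℝ)^(m+1)) := by ring
  have hgeoS : ∀ (y : Y) (n m : ℕ), n ≤ m →
      dist ((seq m).h.symm y) ((seq n).h.symm y) ≤ 2*((1/2:ℝ)^n - (1/2:ℝ)^m) := by
    intro y n m hnm
    induction m, hnm using Nat.le_induction with
    | base => simp
    | succ m hm ih =>
        calc dist ((seq (m+1)).h.symm y) ((seq n).h.symm y)
            ≤ dist ((seq (m+1)).h.symm y) ((seq m).h.symm y)
              + dist ((seq m).h.symm y) ((seq n).h.symm y) := dist_triangle _ _ _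
          _ ≤ (1/2:ℝ)^m + 2*((1/2:ℝ)^n - (1/2:ℝ)^m) :=
              add_le_add ((hsub m).2.2.2.2.2.2.2 y) ih
          _ = 2*((1/2:ℝ)^n - (1/2:ℝ)^(m+1)) := by ring
  have hgeo' : ∀ (y : Y) (n m : ℕ), n ≤ m →
      dist ((seq m).h y) ((seq n).h y) ≤ 2*(1/2:ℝ)^n := by
    intro y n m hnm
    refine (hgeo y n m hnm).trans ?_
    have : (0:ℝ) ≤ (1/2:ℝ)^m := by positivity
    linarith
  have hgeoS' : ∀ (y : Y) (n m : ℕ), n ≤ m →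
      dist ((seq m).h.symm y) ((seq n).h.symm y) ≤ 2*(1/2:ℝ)^n := by
    intro y n m hnm
    refine (hgeoS y n m hnm).trans ?_
    have : (0:ℝ) ≤ (1/2:ℝ)^m := by positivity
    linarith
  have hcau : ∀ y : Y, CauchySeq (fun n => (seq n).h y) := by
    intro y
    refine cauchySeq_of_le_geometric (1/2) 1 (by norm_num) fun n => ?_
    rw [dist_comm, one_mul]
    exact (hsub n).2.2.2.2.2.2.1 y
  have hcauS : ∀ y : Y, CauchySeq (fun n => (seq n).h.symm y) := by
    intro y
    refine cauchySeq_of_le_geometric (1/2) 1 (by norm_num) fun n => ?_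
    rw [dist_comm, one_mul]
    exact (hsub n).2.2.2.2.2.2.2 y
  set hfun : Y → Y := fun y => limUnder atTop (fun n => (seq n).h y) with hfdef
  set gfun : Y → Y := fun y => limUnder atTop (fun n => (seq n).h.symm y) with hgdef
  have htend : ∀ y, Tendsto (fun n => (seq n).h y) atTop (𝓝 (hfun y)) :=
    fun y => (hcau y).tendsto_limUnder
  have gtend : ∀ y, Tendsto (fun n => (seq n).h.symm y) atTop (𝓝 (gfun y)) :=
    fun y => (hcauS y).tendsto_limUnder
  have hdistf : ∀ (y : Y) (n : ℕ), dist (hfun y) ((seq n).h y) ≤ 2*(1/2:ℝ)^n := by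
    intro y n
    refine le_of_tendsto ((htend y).dist tendsto_const_nhds) ?_
    filter_upwards [eventually_ge_atTop n] with m hm
    exact hgeo' y n m hm
  have hdistg : ∀ (y : Y) (n : ℕ), dist (gfun y) ((seq n).h.symm y) ≤ 2*(1/2:ℝ)^n := by
    intro y n
    refine le_of_tendsto ((gtend y).dist tendsto_const_nhds) ?_
    filter_upwards [eventually_ge_atTop n] with m hm
    exact hgeoS' y n m hm
  have hhalf : ∀ ε : ℝ, 0 < ε → ∃ N : ℕ, 2*(1/2:ℝ)^N < ε := by
    intro ε hε
    obtain ⟨N, hN⟩ := exists_pow_lt_of_lt_one (half_pos hε) (by norm_num : (1/2:ℝ) < 1)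
    exact ⟨N, by linarith⟩
  have hfc : Continuous hfun := by
    refine TendstoUniformly.continuous (F := fun n y => (seq n).h y) (p := (atTop : Filter ℕ)) ?_
      (Eventually.of_forall fun n => (seq n).h.continuous).frequently
    rw [Metric.tendstoUniformly_iff]
    intro ε hε
    obtain ⟨N, hN⟩ := hhalf ε hε
    filter_upwards [eventually_ge_atTop N] with n hn y
    have h1 := hdistf y n
    have h2 : (1/2:ℝ)^n ≤ (1/2:ℝ)^N :=
      pow_le_pow_of_le_one (by norm_num) (by norm_num) hn
    calc dist (hfun y) ((seq n).h y) ≤ 2*(1/2:ℝ)^n := h1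
      _ ≤ 2*(1/2:ℝ)^N := by linarith
      _ < ε := hN
  have hgc : Continuous gfun := by
    refine TendstoUniformly.continuous (F := fun n y => (seq n).h.symm y) (p := (atTop : Filter ℕ)) ?_
      (Eventually.of_forall fun n => (seq n).h.symm.continuous).frequently
    rw [Metric.tendstoUniformly_iff]
    intro ε hε
    obtain ⟨N, hN⟩ := hhalf ε hε
    filter_upwards [eventually_ge_atTop N] with n hn y
    have h1 := hdistg y n
    have h2 : (1/2:ℝ)^n ≤ (1/2:ℝ)^N :=
      pow_le_pow_of_le_one (by norm_num) (by norm_num) hn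
    calc dist (gfun y) ((seq n).h.symm y) ≤ 2*(1/2:ℝ)^n := h1
      _ ≤ 2*(1/2:ℝ)^N := by linarith
      _ < ε := hN
  have hzero : Tendsto (fun n : ℕ => 4*(1/2:ℝ)^n) atTop (𝓝 0) := by
    have := tendsto_pow_atTop_nhds_zero_of_lt_one
      (by norm_num : (0:ℝ) ≤ 1/2) (by norm_num : (1/2:ℝ) < 1)
    simpa using this.const_mul 4
  have hkey1 : ∀ (y : Y) (n : ℕ), dist ((seq n).h (gfun y)) y ≤ 2*(1/2:ℝ)^n := by
    intro y n
    have htz : Tendsto (fun m => (seq n).h ((seq m).h.symm y)) atTop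
        (𝓝 ((seq n).h (gfun y))) :=
      ((seq n).h.continuous.tendsto (gfun y)).comp (gtend y)
    refine le_of_tendsto (htz.dist tendsto_const_nhds) ?_
    filter_upwards [eventually_ge_atTop n] with m hm
    have h1 := hgeo' ((seq m).h.symm y) n m hm
    rw [Homeomorph.apply_symm_apply] at h1
    rw [dist_comm] at h1
    exact h1
  have hkey2 : ∀ (y : Y) (n : ℕ), dist ((seq n).h.symm (hfun y)) y ≤ 2*(1/2:ℝ)^n := by
    intro y n
    have htz : Tendsto (fun m => (seq n).h.symm ((seq m).h y)) atTop
        (𝓝 ((seq n).h.symm (hfun y))) :=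
      ((seq n).h.symm.continuous.tendsto (hfun y)).comp (htend y)
    refine le_of_tendsto (htz.dist tendsto_const_nhds) ?_
    filter_upwards [eventually_ge_atTop n] with m hm
    have h1 := hgeoS' ((seq m).h y) n m hm
    rw [Homeomorph.symm_apply_apply] at h1
    rw [dist_comm] at h1
    exact h1
  have hcomp1 : ∀ y, hfun (gfun y) = y := by
    intro y
    have hb : ∀ n : ℕ, dist (hfun (gfun y)) y ≤ 4*(1/2:ℝ)^n := by
      intro n
      calc dist (hfun (gfun y)) y
          ≤ dist (hfun (gfun y)) ((seq n).h (gfun y)) + dist ((seq n).h (gfun y)) y :=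
            dist_triangle _ _ _
        _ ≤ 2*(1/2:ℝ)^n + 2*(1/2:ℝ)^n := add_le_add (hdistf _ n) (hkey1 y n)
        _ = 4*(1/2:ℝ)^n := by ring
    have hle : dist (hfun (gfun y)) y ≤ 0 := ge_of_tendsto' hzero hb
    exact dist_le_zero.1 hle
  have hcomp2 : ∀ y, gfun (hfun y) = y := by
    intro y
    have hb : ∀ n : ℕ, dist (gfun (hfun y)) y ≤ 4*(1/2:ℝ)^n := by
      intro n
      calc dist (gfun (hfun y)) y
          ≤ dist (gfun (hfun y)) ((seq n).h.symm (hfun y))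
            + dist ((seq n).h.symm (hfun y)) y := dist_triangle _ _ _
        _ ≤ 2*(1/2:ℝ)^n + 2*(1/2:ℝ)^n := add_le_add (hdistg _ n) (hkey2 y n)
        _ = 4*(1/2:ℝ)^n := by ring
    have hle : dist (gfun (hfun y)) y ≤ 0 := ge_of_tendsto' hzero hb
    exact dist_le_zero.1 hle
  have himg : hfun '' D = E := by
    apply Set.Subset.antisymm
    · rintro _ ⟨x, hxD, rfl⟩
      rw [hd] at hxD
      obtain ⟨i, rfl⟩ := hxD
      have hiA : i ∈ (seq (2*i+1)).A := by
        have h3 := (hsub (2*i)).2.2.1 (even_two_mul i)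
        have h4 : (2*i)/2 = i := by omega
        rwa [h4] at h3
      have : hfun (d i) = (seq (2*i+1)).h (d i) := by
        refine tendsto_nhds_unique (htend (d i)) ?_
        refine Tendsto.congr' ?_ tendsto_const_nhds
        filter_upwards [eventually_ge_atTop (2*i+1)] with m hm
        exact (hstabA hm i hiA).symm
      rw [this]
      exact (seq (2*i+1)).hA i hiA
    · intro z hz
      rw [he] at hz
      obtain ⟨j, rfl⟩ := hz
      have hjB : j ∈ (seq (2*j+2)).B := by
        have hodd : ¬ Even (2*j+1) := by
          intro hcon
          exact (Nat.even_add_one.mp hcon) (even_two_mul j)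
        have h3 := (hsub (2*j+1)).2.2.2.1 hodd
        have h4 : (2*j+1)/2 = j := by omega
        rwa [h4] at h3
      have hdD' : (seq (2*j+2)).h.symm (e j) ∈ D := (seq (2*j+2)).hB j hjB
      have hconst : ∀ m, 2*j+2 ≤ m →
          (seq m).h ((seq (2*j+2)).h.symm (e j)) = e j := by
        intro m hm
        have h5 := hstabB hm j hjB
        rw [← h5, Homeomorph.apply_symm_apply]
      have hlim : hfun ((seq (2*j+2)).h.symm (e j)) = e j := by
        refine tendsto_nhds_unique (htend _) ?_
        refine Tendsto.congr' ?_ tendsto_const_nhds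
        filter_upwards [eventually_ge_atTop (2*j+2)] with m hm
        exact (hconst m hm).symm
      exact ⟨_, hdD', hlim⟩
  exact ⟨Homeomorph.mk ⟨hfun, gfun, hcomp2, hcomp1⟩ hfc hgc, himg⟩

/-- A separable space is countable dense homogeneous if any countable dense subset can be
mapped onto any other by an autohomeomorphism. -/
def CDH (X : Type*) [TopologicalSpace X] : Prop :=
  TopologicalSpace.SeparableSpace X ∧
    ∀ D E : Set X, D.Countable → Dense D → E.Countable → Dense E →
      ∃ h : X ≃ₜ X, h '' D = E

/-- `C_p(X)`: continuous real-valued functions on `X` with the topology of pointwise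
convergence (subspace of the product `ℝ^X`). -/
abbrev Cp (X : Type*) [TopologicalSpace X] : Type _ := {f : X → ℝ // Continuous f}

private lemma cp_discrete_of_cdh {X : Type*} [TopologicalSpace X] [Countable X]
    [TopologicalSpace.MetrizableSpace X] (hCDH : CDH (Cp X)) : DiscreteTopology X := by
  classical
  by_contra hnd
  rw [discreteTopology_iff_isOpen_singleton] at hnd
  push_neg at hnd
  obtain ⟨x, hx⟩ := hnd
  letI : MetricSpace X := TopologicalSpace.metrizableSpaceMetric X
  haveI hnb : (𝓝[≠] x).NeBot := by
    rw [isOpen_singleton_iff_punctured_nhds] at hx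
    exact ⟨hx⟩
  obtain ⟨u0, hu0⟩ := (𝓝[≠] x).exists_seq_tendsto
  rw [tendsto_nhdsWithin_iff] at hu0
  obtain ⟨hu0t, hu0ne⟩ := hu0
  rw [eventually_atTop] at hu0ne
  obtain ⟨N0, hN0⟩ := hu0ne
  set w : ℕ → X := fun k => u0 (k + N0) with hwdef
  have hwt : Tendsto w atTop (𝓝 x) := hu0t.comp (tendsto_add_atTop_nat N0)
  have hwne : ∀ k, w k ≠ x := fun k => hN0 (k + N0) (Nat.le_add_left _ _)
  have havoid : ∀ S : Set X, S.Finite → ∀ᶠ k in atTop, w k ∉ S := by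
    intro S hS
    have hclosed : IsClosed (S \ {x}) := (hS.subset diff_subset).isClosed
    have hxo : x ∈ (S \ {x})ᶜ := fun hc => hc.2 rfl
    have hmem : (S \ {x})ᶜ ∈ 𝓝 x := hclosed.isOpen_compl.mem_nhds hxo
    filter_upwards [hwt hmem] with k hk
    intro hkS
    exact hk ⟨hkS, hwne k⟩
  set F : ℕ → Set (Cp X) := fun n => {f : Cp X | ∀ k, n ≤ k → |f.1 (w k) - f.1 x| ≤ 1}
    with hFdef
  have hFclosed : ∀ n, IsClosed (F n) := by
    intro n
    have heq : F n = ⋂ (k : ℕ), ⋂ (_ : n ≤ k), {f : Cp X | |f.1 (w k) - f.1 x| ≤ 1} := by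
      ext f; simp [hFdef]
    rw [heq]
    refine isClosed_iInter fun k => isClosed_iInter fun _ => ?_
    have hcont : Continuous fun f : Cp X => |f.1 (w k) - f.1 x| :=
      (((continuous_apply (w k)).comp continuous_subtype_val).sub
        ((continuous_apply x).comp continuous_subtype_val)).abs
    exact isClosed_le hcont continuous_const
  have hFmono : ∀ {n m : ℕ}, n ≤ m → F n ⊆ F m := by
    intro n m hnm f hf k hk
    exact hf k (hnm.trans hk)
  have hFcover : ∀ f : Cp X, ∃ n, f ∈ F n := by
    intro f
    have ht : Tendsto (fun k => f.1 (w k)) atTop (𝓝 (f.1 x)) := (f.2.tendsto x).comp hwt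
    obtain ⟨N, hN⟩ := Metric.tendsto_atTop.1 ht 1 one_pos
    refine ⟨N, fun k hk => ?_⟩
    have := hN k hk
    rw [Real.dist_eq] at this
    exact le_of_lt this
  have hFnwd : ∀ (n : ℕ) (O : Set (Cp X)), IsOpen O → O ⊆ F n → O = ∅ := by
    intro n O hO hOF
    by_contra hne
    obtain ⟨g, hg⟩ := nonempty_iff_ne_empty.2 hne
    obtain ⟨O', hO', hOeq⟩ := isOpen_induced_iff.1 hO
    have hgO' : g.1 ∈ O' := by rw [← hOeq] at hg; exact hg
    obtain ⟨I, uu, huu, hsub⟩ := isOpen_pi_iff.1 hO' g.1 hgO'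
    obtain ⟨k, hkI, hkn⟩ := ((havoid (↑I) I.finite_toSet).and (eventually_ge_atTop n)).exists
    set T : Set X := ↑I ∪ {x} with hTdef
    have hTfin : T.Finite := I.finite_toSet.union (finite_singleton x)
    have hwkT : w k ∉ T := by
      rintro (hin | hxx)
      · exact hkI hin
      · exact hwne k hxx
    obtain ⟨ρ, hρ, hρd⟩ := exists_pos_le_dist hTfin hwkT
    set M : ℝ := 2 + |g.1 (w k) - g.1 x| with hMdef
    have hM0 : (0:ℝ) ≤ M := by positivity
    set bump : X → ℝ := fun t => M * max 0 (1 - dist t (w k) / ρ) with hbdef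
    have hbump_cont : Continuous bump := continuous_const.mul
      (continuous_const.max
        (continuous_const.sub ((continuous_id.dist continuous_const).div_const ρ)))
    have hbump_wk : bump (w k) = M := by
      rw [hbdef]; simp
    have hbump_T : ∀ t ∈ T, bump t = 0 := by
      intro t ht
      have h1 : ρ ≤ dist t (w k) := by
        rw [dist_comm]; exact hρd t ht
      have h2 : (1:ℝ) ≤ dist t (w k) / ρ := (one_le_div hρ).2 h1
      rw [hbdef]
      simp only
      rw [max_eq_left (by linarith), mul_zero]
    set f1 : Cp X := ⟨g.1 + bump, g.2.add hbump_cont⟩ with hf1def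
    have hf1O : f1 ∈ O := by
      rw [← hOeq]
      show f1.1 ∈ O'
      refine hsub ?_
      rw [Set.mem_pi]
      intro t ht
      have hft : f1.1 t = g.1 t := by
        show g.1 t + bump t = g.1 t
        rw [hbump_T t (Or.inl ht), add_zero]
      rw [hft]
      exact (huu t ht).2
    have hf1F := hOF hf1O
    have hcontr := hf1F k hkn
    have h1 : f1.1 (w k) = g.1 (w k) + M := by
      show g.1 (w k) + bump (w k) = _
      rw [hbump_wk]
    have h2 : f1.1 x = g.1 x := by
      show g.1 x + bump x = _
      rw [hbump_T x (Or.inr rfl), add_zero]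
    rw [h1, h2] at hcontr
    have h4 := neg_abs_le (g.1 (w k) - g.1 x)
    have h6 : (2:ℝ) ≤ g.1 (w k) + M - g.1 x := by
      rw [hMdef]; linarith
    have h7 := le_abs_self (g.1 (w k) + M - g.1 x)
    linarith
  haveI hsc : SecondCountableTopology (Cp X) := Topology.IsEmbedding.subtypeVal.secondCountableTopology
  obtain ⟨bb, hbbc, hbne, hbasis⟩ := TopologicalSpace.exists_countable_basis (Cp X)
  set z0 : Cp X := ⟨fun _ => 0, continuous_const⟩ with hz0
  have hbbnonempty : bb.Nonempty := by
    obtain ⟨s, hs, _, _⟩ := hbasis.exists_subset_of_mem_open (mem_univ z0) isOpen_univ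
    exact ⟨s, hs⟩
  obtain ⟨β, hβ⟩ := hbbc.exists_eq_range hbbnonempty
  have hβb : ∀ n, β n ∈ bb := fun n => hβ ▸ mem_range_self n
  have hpick : ∀ n : ℕ, ∃ f : Cp X, f ∈ β n ∧ f ∉ F n := by
    intro n
    have hopen : IsOpen (β n) := hbasis.isOpen (hβb n)
    have hne' : (β n).Nonempty :=
      nonempty_iff_ne_empty.2 (fun hc => hbne (hc ▸ hβb n))
    by_contra hc
    push_neg at hc
    exact hne'.ne_empty (hFnwd n (β n) hopen hc)
  choose dseq hdβ hdF using hpick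
  set D : Set (Cp X) := range dseq with hDdef
  have hDc : D.Countable := countable_range _
  have hDdense : Dense D := by
    rw [dense_iff_inter_open]
    intro U hU hUne
    obtain ⟨f0, hf0⟩ := hUne
    obtain ⟨s, hs, _, hsU⟩ := hbasis.exists_subset_of_mem_open hf0 hU
    rw [hβ] at hs
    obtain ⟨n, rfl⟩ := hs
    exact ⟨dseq n, hsU (hdβ n), mem_range_self n⟩
  set Qc : Set (Cp X) := range (fun q : ℚ => (⟨fun _ => (q:ℝ), continuous_const⟩ : Cp X))
    with hQdef
  set E : Set (Cp X) := D ∪ Qc with hEdef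
  have hEc : E.Countable := hDc.union (countable_range _)
  have hEdense : Dense E := hDdense.mono subset_union_left
  obtain ⟨h, hh⟩ := hCDH.2 D E hDc hDdense hEc hEdense
  have himgpre : ∀ (s : Set (Cp X)), h '' s = h.symm ⁻¹' s := by
    intro s
    ext z
    constructor
    · rintro ⟨y, hy, rfl⟩
      rwa [mem_preimage, h.symm_apply_apply]
    · intro hz
      exact ⟨h.symm z, hz, h.apply_symm_apply z⟩
  set cmap : ℝ → Cp X := fun r => ⟨fun _ => r, continuous_const⟩ with hcmapdef
  have hcmapc : Continuous cmap :=
    Continuous.subtype_mk (continuous_pi fun _ => continuous_id) _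
  set A : ℕ → Set ℝ := fun n => cmap ⁻¹' (h '' F n) with hAdef
  have hAclosed : ∀ n, IsClosed (A n) := by
    intro n
    have : A n = cmap ⁻¹' (h.symm ⁻¹' F n) := by rw [hAdef]; simp only [himgpre]
    rw [this]
    exact (((hFclosed n).preimage h.symm.continuous)).preimage hcmapc
  have hAcover : ⋃ n, A n = univ := by
    apply eq_univ_of_forall
    intro r
    obtain ⟨n, hn⟩ := hFcover (h.symm (cmap r))
    refine mem_iUnion.2 ⟨n, ?_⟩
    show cmap r ∈ h '' F n
    exact ⟨h.symm (cmap r), hn, h.apply_symm_apply _⟩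
  obtain ⟨n₀, hint⟩ := nonempty_interior_of_iUnion_of_closed hAclosed hAcover
  obtain ⟨z, hz⟩ := hint
  obtain ⟨ε, hε, hball⟩ := Metric.isOpen_iff.1 isOpen_interior z hz
  have hQinf : {q : ℚ | z - ε < (q:ℝ) ∧ (q:ℝ) < z + ε}.Infinite :=
    rat_Ioo_infinite (by linarith)
  have hfin : (E ∩ h '' F n₀).Finite := by
    have h1 : E ∩ h '' F n₀ = h '' (D ∩ F n₀) := by
      rw [← hh, ← Set.image_inter h.injective]
    have h2 : (D ∩ F n₀).Finite := by
      refine Set.Finite.subset ((Set.finite_Iio n₀).image dseq) ?_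
      rintro f ⟨⟨k, rfl⟩, hfF⟩
      refine ⟨k, ?_, rfl⟩
      rw [Set.mem_Iio]
      by_contra hkn
      push_neg at hkn
      exact hdF k (hFmono hkn hfF)
    rw [h1]
    exact h2.image _
  have hinj : Set.InjOn (fun q : ℚ => cmap (q:ℝ))
      {q : ℚ | z - ε < (q:ℝ) ∧ (q:ℝ) < z + ε} := by
    intro q _ q' _ hqq
    have := congrArg (fun f : Cp X => f.1 x) hqq
    simp only [hcmapdef] at this
    exact_mod_cast this
  have hsubset : (fun q : ℚ => cmap (q:ℝ)) '' {q : ℚ | z - ε < (q:ℝ) ∧ (q:ℝ) < z + ε}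
      ⊆ E ∩ h '' F n₀ := by
    rintro _ ⟨q, hq, rfl⟩
    constructor
    · exact Or.inr ⟨q, rfl⟩
    · have hmem : (q:ℝ) ∈ Metric.ball z ε := by
        rw [Real.ball_eq_Ioo]
        exact ⟨hq.1, hq.2⟩
      have hqa : (q:ℝ) ∈ A n₀ := interior_subset (hball hmem)
      exact hqa
  exact (hQinf.image hinj).mono hsubset hfin

private lemma dense_image_homeo {Y Z : Type*} [TopologicalSpace Y] [TopologicalSpace Z]
    (φ : Y ≃ₜ Z) {s : Set Y} (hs : Dense s) : Dense (φ '' s) := by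
  have himg : φ '' s = φ.symm ⁻¹' s := by
    ext z
    constructor
    · rintro ⟨y, hy, rfl⟩
      rwa [mem_preimage, φ.symm_apply_apply]
    · intro hz
      exact ⟨φ.symm z, hz, φ.apply_symm_apply z⟩
  rw [himg, dense_iff_closure_eq, ← Homeomorph.preimage_closure,
    hs.closure_eq, preimage_univ]

private lemma cp_cdh_of_discrete {X : Type*} [TopologicalSpace X] [Countable X]
    [DiscreteTopology X] : CDH (Cp X) := by
  classical
  haveI hsc : SecondCountableTopology (Cp X) := Topology.IsEmbedding.subtypeVal.secondCountableTopology
  refine ⟨inferInstance, ?_⟩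
  intro D E hDc hDd hEc hEd
  haveI : Nonempty (Cp X) := ⟨⟨fun _ => 0, continuous_const⟩⟩
  set Φ : (X → ℝ) ≃ₜ Cp X := Homeomorph.mk
    (Equiv.mk (fun f => ⟨f, continuous_of_discreteTopology⟩) Subtype.val
      (fun f => rfl) (fun f => rfl))
    (Continuous.subtype_mk continuous_id _) continuous_subtype_val with hΦdef
  letI upg := TopologicalSpace.upgradeIsCompletelyMetrizable (X → ℝ)
  have slh : ∀ (a : X → ℝ) (ε : ℝ), 0 < ε → ∃ δ > 0, ∀ b, dist a b < δ →
      ∃ g : (X → ℝ) ≃ₜ (X → ℝ), g a = b ∧ ∀ y, ε ≤ dist y a → g y = y := by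
    intro a ε hε
    obtain ⟨V, hVopen, haV, hV⟩ := slh_pi a (Metric.ball a ε) Metric.isOpen_ball
      (Metric.mem_ball_self hε)
    obtain ⟨δ, hδ, hballV⟩ := Metric.isOpen_iff.1 hVopen a haV
    refine ⟨δ, hδ, fun b hb => ?_⟩
    have hbV : b ∈ V := hballV (by rwa [Metric.mem_ball, dist_comm])
    obtain ⟨g, hga, hgfix⟩ := hV b hbV
    refine ⟨g, hga, fun y hy => hgfix y ?_⟩
    rw [Metric.mem_ball]
    exact not_lt.2 hy
  obtain ⟨k, hk⟩ := cdh_backforth slh (Φ.symm '' D) (Φ.symm '' E)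
    (dense_image_homeo Φ.symm hDd) (dense_image_homeo Φ.symm hEd)
    ((hDd.nonempty).image _) ((hEd.nonempty).image _)
    (hDc.image _) (hEc.image _)
  refine ⟨(Φ.symm.trans k).trans Φ, ?_⟩
  calc ((Φ.symm.trans k).trans Φ) '' D = (⇑Φ ∘ (⇑k ∘ ⇑Φ.symm)) '' D := rfl
    _ = Φ '' (k '' (Φ.symm '' D)) := by rw [Set.image_comp, Set.image_comp]
    _ = Φ '' (Φ.symm '' E) := by rw [hk]
    _ = E := by
        rw [← Set.image_comp, Φ.self_comp_symm, Set.image_id]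

/-- For a countable metrizable space `X`, the space `C_p(X)` is countable dense homogeneous
if and only if `X` is discrete. -/
theorem cdh_Cp_countable_metrizable_iff_discrete (X : Type*) [TopologicalSpace X]
    [Countable X] [TopologicalSpace.MetrizableSpace X] :
    CDH (Cp X) ↔ DiscreteTopology X := by
  constructor
  · exact cp_discrete_of_cdh
  · intro h
    exact cp_cdh_of_discrete
end

section
/- Let X be an uncountable, σ-compact, separable metrizable space. Then C_p(X) is not countable dense homogeneous. -/
open Filter Topology Set

namespace CpCDHProof

variable {X : Type*}

section Bump

variable [MetricSpace X]

/-- A triangular bump function centered at `y`, of radius `r`. -/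
noncomputable def bump (y : X) (r : ℝ) (x : X) : ℝ := max 0 (1 - dist x y / r)

lemma bump_continuous (y : X) (r : ℝ) : Continuous (bump y r) :=
  continuous_const.max (continuous_const.sub ((continuous_id.dist continuous_const).div_const r))

lemma bump_self (y : X) (r : ℝ) : bump y r y = 1 := by
  simp [bump, dist_self]

lemma bump_eq_zero {y x : X} {r : ℝ} (hr : 0 < r) (h : r ≤ dist x y) : bump y r x = 0 := by
  have h1 : 1 - dist x y / r ≤ 0 := by
    rw [sub_nonpos, le_div_iff₀ hr]; linarith
  exact max_eq_left h1

lemma bump_eq {y x : X} {r : ℝ} (h : dist x y < r) : bump y r x = 1 - dist x y / r := by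
  have hr : 0 < r := lt_of_le_of_lt dist_nonneg h
  have : 0 ≤ 1 - dist x y / r := by
    rw [sub_nonneg, div_le_one hr]; linarith
  exact max_eq_right this

/-- Finite rational combinations of bumps centered at points of a sequence. -/
noncomputable def lam (u : ℕ → X) (L : List (ℚ × ℕ × ℚ)) (x : X) : ℝ :=
  (L.map fun t => (t.1 : ℝ) * bump (u t.2.1) (t.2.2 : ℝ) x).sum

lemma lam_continuous (u : ℕ → X) (L : List (ℚ × ℕ × ℚ)) : Continuous (lam u L) := by
  induction L with
  | nil => exact (continuous_const : Continuous fun _ : X => (0:ℝ))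
  | cons a L ih =>
    have : lam u (a :: L) = fun x => (a.1 : ℝ) * bump (u a.2.1) (a.2.2 : ℝ) x + lam u L x := by
      funext x; simp [lam]
    rw [this]
    exact (continuous_const.mul (bump_continuous _ _)).add ih

/-- The key approximation lemma : bump combinations approximate any function on any
finite set of points. -/
lemma lam_dense (u : ℕ → X) (hu : DenseRange u) (f : X → ℝ)
    (F : Finset X) {ε : ℝ} (hε : 0 < ε) :
    ∃ L : List (ℚ × ℕ × ℚ), ∀ x ∈ F, |lam u L x - f x| < ε := by
  classical
  -- a separation constant for the points of `F`
  obtain ⟨δ, hδ0, hδ⟩ : ∃ δ : ℝ, 0 < δ ∧ ∀ x ∈ F, ∀ z ∈ F, x ≠ z → 3 * δ ≤ dist x z := by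
    set s : Finset ℝ := ((F ×ˢ F).filter fun p => p.1 ≠ p.2).image fun p => dist p.1 p.2 with hs
    by_cases hne : s.Nonempty
    · refine ⟨s.min' hne / 3, ?_, ?_⟩
      · have hmem := s.min'_mem hne
        obtain ⟨⟨x, z⟩, hp, hd⟩ := Finset.mem_image.mp hmem
        have hxz : x ≠ z := (Finset.mem_filter.mp hp).2
        have hpos : 0 < dist x z := dist_pos.mpr hxz
        rw [hd] at hpos
        linarith
      · intro x hx z hz hxz
        have hmem : dist x z ∈ s := by
          rw [hs]
          exact Finset.mem_image.mpr ⟨(x, z),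
            Finset.mem_filter.mpr ⟨Finset.mem_product.mpr ⟨hx, hz⟩, hxz⟩, rfl⟩
        have := s.min'_le _ hmem
        linarith
    · refine ⟨1, one_pos, fun x hx z hz hxz => ?_⟩
      exact absurd ⟨dist x z, Finset.mem_image.mpr ⟨(x, z),
        Finset.mem_filter.mpr ⟨Finset.mem_product.mpr ⟨hx, hz⟩, hxz⟩, rfl⟩⟩ hne
  -- a rational radius
  obtain ⟨r, hr1, hr2⟩ := exists_rat_btwn (show δ / 2 < δ by linarith)
  have hr0 : (0 : ℝ) < r := by linarith
  -- rational approximations of the values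
  choose c hc using fun x : X => exists_rat_near (f x) (half_pos hε)
  -- nearby points from the dense sequence
  have hδ' : ∀ x : X, 0 < min (δ / 2) (ε * r / (2 * (|(c x : ℝ)| + 1))) := fun x =>
    lt_min (by linarith) (by positivity)
  choose n hn using fun x : X => hu.exists_dist_lt x (hδ' x)
  refine ⟨F.toList.map fun x => (c x, n x, r), ?_⟩
  intro x hx
  have hsum : lam u (F.toList.map fun z => (c z, n z, r)) x
      = ∑ z ∈ F, (c z : ℝ) * bump (u (n z)) (r : ℝ) x := by
    rw [lam, List.map_map, ← Finset.sum_map_toList]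
    rfl
  rw [hsum, Finset.sum_eq_single x]
  · -- main term estimate
    have hdx1 : dist x (u (n x)) < δ / 2 := lt_of_lt_of_le (hn x) (min_le_left _ _)
    have hdx2 : dist x (u (n x)) < ε * r / (2 * (|(c x : ℝ)| + 1)) :=
      lt_of_lt_of_le (hn x) (min_le_right _ _)
    have hb : bump (u (n x)) (r : ℝ) x = 1 - dist x (u (n x)) / r := bump_eq (by linarith)
    rw [hb]
    have hcx : |f x - (c x : ℝ)| < ε / 2 := hc x
    have hd0 : 0 ≤ dist x (u (n x)) := dist_nonneg
    have hterm : |(c x : ℝ)| * (dist x (u (n x)) / r) < ε / 2 := by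
      set A : ℝ := |(c x : ℝ)| + 1 with hA
      have hApos : 0 < A := by positivity
      have h1 : |(c x : ℝ)| * (dist x (u (n x)) / r)
          ≤ A * (dist x (u (n x)) / r) := by
        have h0 : 0 ≤ dist x (u (n x)) / r := div_nonneg hd0 hr0.le
        nlinarith [abs_nonneg ((c x : ℝ))]
      have h2 : dist x (u (n x)) / r < ε / (2 * A) := by
        rw [div_lt_iff₀ hr0]
        have heq : ε / (2 * A) * r = ε * r / (2 * A) := by ring
        rw [heq]
        exact hdx2
      have h3 : A * (dist x (u (n x)) / r) < A * (ε / (2 * A)) :=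
        (mul_lt_mul_iff_right₀ hApos).mpr h2
      have h4 : A * (ε / (2 * A)) = ε / 2 := by
        field_simp
      linarith
    have key : |(c x : ℝ) * (1 - dist x (u (n x)) / (r : ℝ)) - f x|
        ≤ |(c x : ℝ)| * (dist x (u (n x)) / r) + |f x - (c x : ℝ)| := by
      have heq : (c x : ℝ) * (1 - dist x (u (n x)) / (r : ℝ)) - f x
          = (-((c x : ℝ) * (dist x (u (n x)) / r))) + (-(f x - (c x : ℝ))) := by ring
      rw [heq]
      calc |(-((c x : ℝ) * (dist x (u (n x)) / r))) + (-(f x - (c x : ℝ)))|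
          ≤ |(-((c x : ℝ) * (dist x (u (n x)) / r)))| + |(-(f x - (c x : ℝ)))| := abs_add_le _ _
        _ = |(c x : ℝ) * (dist x (u (n x)) / r)| + |f x - (c x : ℝ)| := by
            rw [abs_neg, abs_neg]
        _ = |(c x : ℝ)| * (dist x (u (n x)) / r) + |f x - (c x : ℝ)| := by
            rw [abs_mul, abs_of_nonneg (div_nonneg hd0 hr0.le)]
    linarith
  · -- other terms vanish
    intro z hz hzx
    have h3 : 3 * δ ≤ dist x z := hδ x hx z hz (Ne.symm hzx)
    have h4 : dist z (u (n z)) < δ / 2 := lt_of_lt_of_le (hn z) (min_le_left _ _)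
    have htri : dist x z ≤ dist x (u (n z)) + dist (u (n z)) z := dist_triangle _ _ _
    have hcomm : dist (u (n z)) z = dist z (u (n z)) := dist_comm _ _
    have : (r : ℝ) ≤ dist x (u (n z)) := by
      rw [hcomm] at htri; linarith
    rw [bump_eq_zero hr0 this, mul_zero]
  · intro hxF
    exact absurd hx hxF

end Bump

section Approx

variable [TopologicalSpace X]

/-- Pointwise approximation on finite sets implies density in `Cp X`. -/
lemma dense_of_approx {S : Set (Cp X)}
    (H : ∀ (f : Cp X) (F : Finset X) (ε : ℝ), 0 < ε →
      ∃ g ∈ S, ∀ x ∈ F, |g.1 x - f.1 x| < ε) :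
    Dense S := by
  rw [dense_iff_inter_open]
  rintro U hU ⟨f, hf⟩
  obtain ⟨V, hV, rfl⟩ := isOpen_induced_iff.mp hU
  have hfV : f.1 ∈ V := hf
  obtain ⟨I, w, hw, hsub⟩ := isOpen_pi_iff.mp hV f.1 hfV
  choose! εx hεx using fun a (ha : a ∈ I) =>
    Metric.isOpen_iff.mp (hw a ha).1 (f.1 a) (hw a ha).2
  obtain ⟨ε0, hε00, hε0⟩ : ∃ e : ℝ, 0 < e ∧ ∀ a ∈ I, e ≤ εx a := by
    by_cases hne : I.Nonempty
    · refine ⟨I.inf' hne εx, ?_, fun a ha => Finset.inf'_le _ ha⟩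
      rw [Finset.lt_inf'_iff]
      exact fun a ha => (hεx a ha).1
    · exact ⟨1, one_pos, fun a ha => absurd ⟨a, ha⟩ hne⟩
  obtain ⟨g, hgS, hg⟩ := H f I ε0 hε00
  refine ⟨g, ?_, hgS⟩
  show g.1 ∈ V
  apply hsub
  rw [Set.mem_pi]
  intro a ha
  apply (hεx a ha).2
  rw [Metric.mem_ball, Real.dist_eq]
  exact lt_of_lt_of_le (hg a ha) (hε0 a ha)

/-- The closed sets of functions bounded by `m` on `K`. -/
def Fm (K : Set X) (m : ℕ) : Set (Cp X) := {f | ∀ x ∈ K, |f.1 x| ≤ m}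

lemma Fm_closed (K : Set X) (m : ℕ) : IsClosed (Fm (X := X) K m) := by
  have : Fm (X := X) K m = ⋂ x ∈ K, {f : Cp X | |f.1 x| ≤ m} := by
    ext f; simp [Fm]
  rw [this]
  exact isClosed_biInter fun x _ => isClosed_le
    ((continuous_apply x).comp continuous_subtype_val).abs continuous_const

lemma exists_mem_Fm {K : Set X} (hK : IsCompact K) (f : Cp X) : ∃ m : ℕ, f ∈ Fm K m := by
  obtain ⟨C, hC⟩ := hK.exists_bound_of_continuousOn f.2.continuousOn
  obtain ⟨m, hm⟩ := exists_nat_ge C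
  exact ⟨m, fun x hx => le_trans (by simpa [Real.norm_eq_abs] using hC x hx) hm⟩

end Approx

end CpCDHProof

open CpCDHProof in
/-- If `X` is an uncountable, σ-compact, separable metrizable space, then `C_p(X)` is not
countable dense homogeneous. -/
theorem not_cdh_Cp_of_uncountable_sigmaCompact (X : Type*) [TopologicalSpace X]
    [TopologicalSpace.MetrizableSpace X] [TopologicalSpace.SeparableSpace X]
    [Uncountable X] [SigmaCompactSpace X] :
    ¬ CDH (Cp X) := by
  rintro ⟨-, H⟩
  letI : MetricSpace X := TopologicalSpace.metrizableSpaceMetric X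
  have hXne : Nonempty X := by infer_instance
  -- a dense sequence in `X`
  set u : ℕ → X := TopologicalSpace.denseSeq X with hu_def
  have hu : DenseRange u := TopologicalSpace.denseRange_denseSeq X
  -- an infinite compact subset of `X`
  obtain ⟨N, hKinf⟩ : ∃ n, (compactCovering X n).Infinite := by
    by_contra hcon
    push_neg at hcon
    have hcnt : (Set.univ : Set X).Countable := by
      rw [← iUnion_compactCovering]
      exact Set.countable_iUnion fun n => (hcon n).countable
    exact (Set.not_countable_univ_iff.mpr inferInstance) hcnt
  set K : Set X := compactCovering X N with hK_def
  have hK : IsCompact K := isCompact_compactCovering X N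
  -- countably many distinct points of `K`
  let y : ℕ → X := fun j => (Set.Infinite.natEmbedding K hKinf j : X)
  have hyK : ∀ j, y j ∈ K := fun j => (Set.Infinite.natEmbedding K hKinf j).2
  have hyinj : Function.Injective y := fun a b hab =>
    (Set.Infinite.natEmbedding K hKinf).injective (Subtype.ext hab)
  -- the countable dense family of bump combinations
  let Λ : List (ℚ × ℕ × ℚ) → Cp X := fun L => ⟨lam u L, lam_continuous u L⟩
  have hΛdense : ∀ (f : Cp X) (F : Finset X) (ε : ℝ), 0 < ε →
      ∃ L : List (ℚ × ℕ × ℚ), ∀ x ∈ F, |(Λ L).1 x - f.1 x| < ε := fun f F ε hε =>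
    lam_dense u hu f.1 F hε
  -- the embedding of constants
  let ι : ℝ → Cp X := fun t => ⟨fun _ => t, continuous_const⟩
  have hιcont : Continuous ι :=
    Continuous.subtype_mk (continuous_pi fun _ => continuous_id) _
  have hιinj : Function.Injective ι := fun a b hab =>
    congrFun (congrArg Subtype.val hab) (Classical.arbitrary X)
  -- the countable dense set `D`
  set D : Set (Cp X) := Set.range Λ ∪ Set.range (fun q : ℚ => ι (q : ℝ)) with hD_def
  have hDcnt : D.Countable := (Set.countable_range _).union (Set.countable_range _)
  have hDdense : Dense D := by
    apply dense_of_approx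
    intro f F ε hε
    obtain ⟨L, hL⟩ := hΛdense f F ε hε
    exact ⟨Λ L, Or.inl ⟨L, rfl⟩, hL⟩
  -- the countable dense set `E`, escaping all the `Fm K m`
  obtain ⟨σ, hσ⟩ := exists_surjective_nat (List (ℚ × ℕ × ℚ) × ℕ × ℚ)
  let ψf : ℕ → X → ℝ := fun k x =>
    lam u (σ k).1 x +
      ((k : ℝ) + |lam u (σ k).1 (y (σ k).2.1)|) * bump (y (σ k).2.1) ((σ k).2.2 : ℝ) x
  have hψc : ∀ k, Continuous (ψf k) := fun k =>
    (lam_continuous u _).add (continuous_const.mul (bump_continuous _ _))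
  let ψ : ℕ → Cp X := fun k => ⟨ψf k, hψc k⟩
  set E : Set (Cp X) := Set.range ψ with hE_def
  have hEcnt : E.Countable := Set.countable_range _
  have hEdense : Dense E := by
    apply dense_of_approx
    intro f F ε hε
    obtain ⟨L, hL⟩ := hΛdense f F ε hε
    have hyinf : (Set.range y).Infinite := Set.infinite_range_of_injective hyinj
    obtain ⟨p, hp⟩ := (hyinf.diff F.finite_toSet).nonempty
    obtain ⟨⟨j, rfl⟩, hpF⟩ := hp
    obtain ⟨ρ, hρ0, hρ⟩ : ∃ ρ : ℝ, 0 < ρ ∧ ∀ x ∈ F, ρ ≤ dist x (y j) := by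
      by_cases hne : F.Nonempty
      · refine ⟨F.inf' hne (fun x => dist x (y j)), ?_, fun x hx => Finset.inf'_le _ hx⟩
        rw [Finset.lt_inf'_iff]
        exact fun x hx => dist_pos.mpr (fun hxy => hpF (hxy ▸ hx))
      · exact ⟨1, one_pos, fun x hx => absurd ⟨x, hx⟩ hne⟩
    obtain ⟨r, hr0, hrρ⟩ := exists_rat_btwn hρ0
    obtain ⟨k, hk⟩ := hσ (L, j, r)
    refine ⟨ψ k, ⟨k, rfl⟩, ?_⟩
    intro x hx
    have hval : ψf k x = lam u L x := by
      simp only [ψf, hk]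
      rw [bump_eq_zero hr0 (le_trans hrρ.le (hρ x hx)), mul_zero, add_zero]
    show |ψf k x - f.1 x| < ε
    rw [hval]
    exact hL x hx
  have hEesc : ∀ m : ℕ, (E ∩ Fm K m).Finite := by
    intro m
    have hsub : E ∩ Fm K m ⊆ ψ '' (Set.Iic m) := by
      rintro e ⟨⟨k, rfl⟩, hFm⟩
      refine ⟨k, ?_, rfl⟩
      have hyk : |(ψ k).1 (y (σ k).2.1)| ≤ (m : ℝ) := hFm (y (σ k).2.1) (hyK _)
      have hval : ψf k (y (σ k).2.1)
          = lam u (σ k).1 (y (σ k).2.1)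
            + ((k : ℝ) + |lam u (σ k).1 (y (σ k).2.1)|) := by
        simp only [ψf, bump_self, mul_one]
      have hge : (k : ℝ) ≤ |ψf k (y (σ k).2.1)| := by
        rw [hval]
        have h1 := neg_abs_le (lam u (σ k).1 (y (σ k).2.1))
        have h2 := le_abs_self (lam u (σ k).1 (y (σ k).2.1)
            + ((k : ℝ) + |lam u (σ k).1 (y (σ k).2.1)|))
        linarith
      have hkm : (k : ℝ) ≤ (m : ℝ) := le_trans hge hyk
      exact_mod_cast hkm
    exact ((Set.finite_Iic m).image ψ).subset hsub
  -- apply countable dense homogeneity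
  obtain ⟨h, hh⟩ := H D E hDcnt hDdense hEcnt hEdense
  -- Baire category argument in `ℝ`
  have hAm_closed : ∀ m : ℕ, IsClosed ((fun t : ℝ => h (ι t)) ⁻¹' Fm K m) := fun m =>
    (Fm_closed K m).preimage (h.continuous.comp hιcont)
  have hAm_cover : ⋃ m : ℕ, (fun t : ℝ => h (ι t)) ⁻¹' Fm K m = Set.univ := by
    ext t
    simp only [Set.mem_iUnion, Set.mem_univ, iff_true, Set.mem_preimage]
    exact exists_mem_Fm hK (h (ι t))
  obtain ⟨m, t0, ht0⟩ := nonempty_interior_of_iUnion_of_closed hAm_closed hAm_cover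
  obtain ⟨ρ, hρ0, hball⟩ := Metric.isOpen_iff.mp isOpen_interior t0 ht0
  have hIoo : Set.Ioo (t0 - ρ) (t0 + ρ) ⊆ (fun t : ℝ => h (ι t)) ⁻¹' Fm K m := by
    rw [← Real.ball_eq_Ioo]
    exact hball.trans interior_subset
  set T : Set ℚ := {q : ℚ | (q : ℝ) ∈ Set.Ioo (t0 - ρ) (t0 + ρ)} with hT_def
  have hlt : t0 - ρ < t0 + ρ := by linarith
  have hTinf : T.Infinite := by
    intro hTfin
    have h1 : Set.Ioo (t0 - ρ) (t0 + ρ)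
        ⊆ closure (Set.Ioo (t0 - ρ) (t0 + ρ) ∩ Set.range (fun q : ℚ => (q : ℝ))) :=
      Rat.denseRange_cast.open_subset_closure_inter isOpen_Ioo
    have h2 : Set.Ioo (t0 - ρ) (t0 + ρ) ∩ Set.range (fun q : ℚ => (q : ℝ))
        = (fun q : ℚ => (q : ℝ)) '' T := by
      ext x
      constructor
      · rintro ⟨hx, q, rfl⟩
        exact ⟨q, hx, rfl⟩
      · rintro ⟨q, hq, rfl⟩
        exact ⟨hq, q, rfl⟩
    have h3 := (hTfin.image (fun q : ℚ => (q : ℝ))).isClosed.closure_eq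
    rw [h2, h3] at h1
    exact Set.Ioo_infinite hlt ((hTfin.image _).subset h1)
  have hmap : (fun q : ℚ => ι (q : ℝ)) '' T ⊆ D ∩ (h : Cp X → Cp X) ⁻¹' Fm K m := by
    rintro _ ⟨q, hq, rfl⟩
    exact ⟨Or.inr ⟨q, rfl⟩, hIoo hq⟩
  have hinjT : Set.InjOn (fun q : ℚ => ι (q : ℝ)) T :=
    (hιinj.comp Rat.cast_injective).injOn
  have hinf : (D ∩ (h : Cp X → Cp X) ⁻¹' Fm K m).Infinite :=
    (hTinf.image hinjT).mono hmap
  have hfin : (D ∩ (h : Cp X → Cp X) ⁻¹' Fm K m).Finite := by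
    have himg : (h : Cp X → Cp X) '' (D ∩ (h : Cp X → Cp X) ⁻¹' Fm K m) = E ∩ Fm K m := by
      rw [Set.image_inter_preimage, hh]
    have hfin' := hEesc m
    rw [← himg] at hfin'
    exact hfin'.of_finite_image (h.injective.injOn)
  exact hinf hfin
end

section
/- Let F be a free filter on ℕ, regarded as a subspace of the Cantor set 2^ℕ via characteristic functions. Then the product F × 2, where 2 is the discrete two-point space, is homeomorphic to F. -/
/-!
If some `A ∈ F` has infinite complement, membership in `F` ignores the coordinates outside `A`,
so `F ≅ F_A × 2^(ℕ \ A)` with `F_A` the trace of `F` on `A`, and `2^(ℕ \ A) × 2 ≅ 2^(ℕ \ A)`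
because `ℕ \ A` is infinite. Otherwise `F` is the cofinite filter, and splitting off one
coordinate identifies it with the cofinite filter on the remaining (still infinite) index set,
times `2`.
-/

open Filter Topology Set

/-- The copy of the filter `F` inside the Cantor set `2^ℕ`, via characteristic functions. -/
def filterSet (F : Filter ℕ) : Set (ℕ → Bool) := {f | {n | f n = true} ∈ F}

variable {ι κ : Type*}

def boolFilterSet (l : Filter ι) : Set (ι → Bool) := {f | {i | f i = true} ∈ l}

theorem filterSet_eq_boolFilterSet (F : Filter ℕ) : filterSet F = boolFilterSet F := rfl

theorem comp_val_mem_boolFilterSet_comap_iff {l : Filter ι} {A : Set ι} (hA : A ∈ l)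
    {f : ι → Bool} :
    f ∘ (↑) ∈ boolFilterSet (l.comap ((↑) : A → ι)) ↔ f ∈ boolFilterSet l :=
  Filter.ext_iff.1 (map_comap_of_mem (by rwa [Subtype.range_coe])) {i | f i = true}

def boolFilterSetComapHomeomorph (e : ι ≃ κ) (l : Filter κ) :
    boolFilterSet (l.comap e) ≃ₜ boolFilterSet l :=
  (Homeomorph.piCongrLeft e.symm).symm.subtype fun f ↦ by
    simp [boolFilterSet, ← map_equiv_symm]

open scoped Classical in
noncomputable def boolFilterSetSplitHomeomorph {l : Filter ι} {A : Set ι} (hA : A ∈ l) :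
    boolFilterSet l ≃ₜ boolFilterSet (l.comap ((↑) : A → ι)) × (↥Aᶜ → Bool) :=
  let split := Homeomorph.piEquivPiSubtypeProd (· ∈ A) fun _ ↦ Bool
  have hpreimage :
      boolFilterSet l = split ⁻¹' (boolFilterSet (l.comap ((↑) : A → ι)) ×ˢ univ) := by
    ext f
    exact (comp_val_mem_boolFilterSet_comap_iff hA).symm.trans ⟨(⟨·, trivial⟩), And.left⟩
  (split.sets hpreimage).trans <|
    (Homeomorph.Set.prod _ _).trans <| (Homeomorph.refl _).prodCongr (Homeomorph.Set.univ _)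

theorem nonempty_fun_prod_homeomorph_fun [Infinite ι] (Y : Type*) [TopologicalSpace Y] :
    Nonempty (((ι → Y) × Y) ≃ₜ (ι → Y)) := by
  obtain ⟨e⟩ : Nonempty (Option ι ≃ ι) :=
    Cardinal.eq.1 (by rw [Cardinal.mk_option, Cardinal.add_one_eq (Cardinal.aleph0_le_mk ι)])
  exact ⟨((Homeomorph.refl _).prodCongr (Homeomorph.funUnique Unit Y).symm).trans <|
    Homeomorph.sumArrowHomeomorphProdArrow.symm.trans <|
      Homeomorph.piCongrLeft (Y := fun _ ↦ Y) ((Equiv.optionEquivSumPUnit.{0} ι).symm.trans e)⟩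

theorem nonempty_boolFilterSet_prod_homeomorph_of_compl_infinite {l : Filter ι} {A : Set ι}
    (hA : A ∈ l) (hAc : Aᶜ.Infinite) :
    Nonempty ((boolFilterSet l × Bool) ≃ₜ boolFilterSet l) := by
  have : Infinite ↥Aᶜ := hAc.to_subtype
  obtain ⟨absorb⟩ := nonempty_fun_prod_homeomorph_fun (ι := ↥Aᶜ) Bool
  let split := boolFilterSetSplitHomeomorph hA
  exact ⟨(split.prodCongr (.refl Bool)).trans <| (Homeomorph.prodAssoc _ _ _).trans <|
    ((Homeomorph.refl _).prodCongr absorb).trans split.symm⟩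

noncomputable def boolFilterSetCofiniteSplitHomeomorph (i : ι) :
    boolFilterSet (cofinite : Filter ι) ≃ₜ
      boolFilterSet (cofinite : Filter ↥({i}ᶜ : Set ι)) × Bool :=
  (boolFilterSetSplitHomeomorph (finite_singleton i).compl_mem_cofinite).trans <|
    (Homeomorph.setCongr (by rw [Subtype.val_injective.comap_cofinite_eq])).prodCongr <|
      (Homeomorph.piCongrLeft (Y := fun _ ↦ Bool) (Equiv.setCongr (compl_compl {i}))).trans
        (Homeomorph.funUnique _ Bool)

theorem nonempty_boolFilterSet_cofinite_prod_homeomorph [Infinite ι] :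
    Nonempty ((boolFilterSet (cofinite : Filter ι) × Bool) ≃ₜ
      boolFilterSet (cofinite : Filter ι)) := by
  obtain ⟨i⟩ := ‹Infinite ι›.nonempty
  obtain ⟨σ⟩ : Nonempty (↥({i}ᶜ : Set ι) ≃ ι) := Cardinal.eq.1 <|
    Cardinal.mk_compl_of_infinite _ <| by
      simpa using Cardinal.one_lt_aleph0.trans_le (Cardinal.aleph0_le_mk ι)
  let reindex :
      boolFilterSet (cofinite : Filter ↥({i}ᶜ : Set ι)) ≃ₜ boolFilterSet (cofinite : Filter ι) :=
    (Homeomorph.setCongr (by rw [σ.injective.comap_cofinite_eq])).trans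
      (boolFilterSetComapHomeomorph σ cofinite)
  exact ⟨((boolFilterSetCofiniteSplitHomeomorph i).trans (reindex.prodCongr (.refl Bool))).symm⟩

theorem filterSet_prod_two_homeomorph_general (F : Filter ℕ)
    (hfree : F ≤ Filter.cofinite) :
    Nonempty ((↥(filterSet F) × Bool) ≃ₜ ↥(filterSet F)) := by
  rw [filterSet_eq_boolFilterSet]
  by_cases h : ∃ A ∈ F, Aᶜ.Infinite
  · obtain ⟨A, hA, hAc⟩ := h
    exact nonempty_boolFilterSet_prod_homeomorph_of_compl_infinite hA hAc
  · obtain rfl : F = cofinite := hfree.antisymm fun A hA ↦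
      mem_cofinite.2 <| not_infinite.1 fun hAc ↦ h ⟨A, hA, hAc⟩
    exact nonempty_boolFilterSet_cofinite_prod_homeomorph

/-- For a free filter `F` on `ℕ`, viewed as a subspace of the Cantor set, the product
`F × 2` (with `2` the discrete two-point space) is homeomorphic to `F`. -/
theorem filterSet_prod_two_homeomorph (F : Filter ℕ) (hproper : F.NeBot)
    (hfree : F ≤ Filter.cofinite) :
    Nonempty ((↥(filterSet F) × Bool) ≃ₜ ↥(filterSet F)) :=
  filterSet_prod_two_homeomorph_general F hfree
end

section
/- Let F be a free filter on ℕ. Then F is non-meager (as a subspace of 2^ℕ) if and only if F^(ω) is non-meager (as a subspace of 2^(ℕ×ℕ)). -/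
open Filter Topology Set

/-- The copy of the filter `F^(ω)` on `ℕ × ℕ` inside `2^(ℕ×ℕ)`, via characteristic
functions: it consists of those `x ⊆ ℕ × ℕ` all of whose sections `{k | (n,k) ∈ x}`
belong to `F`. -/
def powFilterSet (F : Filter ℕ) : Set (ℕ × ℕ → Bool) :=
  {f | ∀ n, {k | f (n, k) = true} ∈ F}

section cyl
variable {α : Type*}

/-- cylinder determined by values of `g` on `s` -/
def Cyl (s : Finset α) (g : α → Bool) : Set (α → Bool) := {f | ∀ j ∈ s, f j = g j}

lemma self_mem_cyl (s : Finset α) (g : α → Bool) : g ∈ Cyl s g := fun _ _ => rfl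

lemma isOpen_cyl (s : Finset α) (g : α → Bool) : IsOpen (Cyl s g) := by
  have h : Cyl s g = Set.pi ↑s (fun j => {g j}) := by
    ext f; simp [Cyl, Set.mem_pi]
  rw [h]
  exact isOpen_set_pi s.finite_toSet (fun a _ => isOpen_discrete _)

lemma exists_cyl_subset {U : Set (α → Bool)} (hU : IsOpen U) {g} (hg : g ∈ U) :
    ∃ s : Finset α, Cyl s g ⊆ U := by
  obtain ⟨I, u, h1, h2⟩ := isOpen_pi_iff.mp hU g hg
  refine ⟨I, fun f hf => h2 (fun a ha => ?_)⟩
  have := hf a ha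
  rw [this]
  exact (h1 a ha).2

end cyl

lemma IsNowhereDense.union' {X : Type*} [TopologicalSpace X] {s t : Set X}
    (hs : IsNowhereDense s) (ht : IsNowhereDense t) : IsNowhereDense (s ∪ t) := by
  have h1 : IsClosed (closure s) ∧ IsNowhereDense (closure s) := ⟨isClosed_closure, hs.closure⟩
  have h2 : IsClosed (closure t) ∧ IsNowhereDense (closure t) := ⟨isClosed_closure, ht.closure⟩
  rw [isClosed_isNowhereDense_iff_compl] at h1 h2
  have : IsClosed (closure s ∪ closure t) ∧ IsNowhereDense (closure s ∪ closure t) := by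
    rw [isClosed_isNowhereDense_iff_compl, compl_union]
    exact ⟨(h1.1).inter (h2.1), h1.2.inter_of_isOpen_left h2.2 h1.1⟩
  rw [IsNowhereDense]
  have hsub : closure (s ∪ t) ⊆ closure s ∪ closure t := le_of_eq closure_union
  have h3 := this.2
  rw [IsNowhereDense, (this.1).closure_eq] at h3
  exact eq_empty_of_subset_empty ((interior_mono hsub).trans h3.le)

/-- L1: if `(A i)` is a pairwise disjoint family of finite sets, then the set of `f`
which eventually meet every `A i` is meagre. -/
lemma isMeagre_of_disjoint_family {α : Type*} (A : ℕ → Finset α)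
    (hd : ∀ s t, s ≠ t → Disjoint (A s) (A t)) :
    IsMeagre {f : α → Bool | ∃ N, ∀ i, N ≤ i → ∃ a ∈ A i, f a = true} := by
  classical
  have hU : {f : α → Bool | ∃ N, ∀ i, N ≤ i → ∃ a ∈ A i, f a = true}
      = ⋃ N, {f | ∀ i, N ≤ i → ∃ a ∈ A i, f a = true} := by
    ext f; simp
  rw [hU]
  apply isMeagre_iUnion
  intro N
  set K : Set (α → Bool) := {f | ∀ i, N ≤ i → ∃ a ∈ A i, f a = true} with hK
  have hclosed : IsClosed K := by
    have : K = ⋂ i ∈ {i : ℕ | N ≤ i}, {f : α → Bool | ∃ a ∈ A i, f a = true} := by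
      ext f; simp [hK]
    rw [this]
    refine isClosed_biInter (fun i _ => ?_)
    have : {f : α → Bool | ∃ a ∈ A i, f a = true}
        = ⋃ a ∈ (A i : Set α), (fun f : α → Bool => f a) ⁻¹' {true} := by ext f; simp
    rw [this]
    exact (A i).finite_toSet.isClosed_biUnion
      (fun a _ => (isClosed_discrete {true}).preimage (continuous_apply a))
  have hnwd : IsNowhereDense K := by
    rw [hclosed.isNowhereDense_iff]
    rw [eq_empty_iff_forall_notMem]
    intro f hf
    obtain ⟨U, hUK, hUopen, hfU⟩ := mem_interior.mp hf
    obtain ⟨s, hs⟩ := exists_cyl_subset hUopen hfU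
    -- only finitely many i have A i meeting s
    have hbadfin : {i : ℕ | ¬ Disjoint (A i) s}.Finite := by
      have hch : ∀ i : {i : ℕ // ¬ Disjoint (A i) s}, ∃ x, x ∈ A i.1 ∧ x ∈ s := by
        intro i
        have := i.2
        rw [Finset.not_disjoint_iff] at this
        exact this
      choose ψ hψ1 hψ2 using hch
      have hinj : Function.Injective (fun i => (⟨ψ i, hψ2 i⟩ : {x // x ∈ s})) := by
        intro i j hij
        simp only [Subtype.mk.injEq] at hij
        apply Subtype.ext
        by_contra hne
        exact Finset.disjoint_left.mp (hd _ _ hne) (hψ1 i) (hij ▸ hψ1 j)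
      have : Finite {i : ℕ // ¬ Disjoint (A i) s} := Finite.of_injective _ hinj
      exact Set.finite_coe_iff.mp this
    obtain ⟨M, hM⟩ := hbadfin.bddAbove
    set i₀ := max N (M + 1) with hi₀
    have hdisj : Disjoint (A i₀) s := by
      by_contra hcon
      have := hM hcon
      omega
    set f' : α → Bool := fun j => if j ∈ A i₀ then false else f j with hf'
    have hcyl : f' ∈ Cyl s f := by
      intro j hj
      simp only [hf']
      rw [if_neg (fun hmem => (Finset.disjoint_left.mp hdisj) hmem hj)]
    have hf'K : f' ∈ K := hUK (hs hcyl)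
    obtain ⟨a, ha, hatrue⟩ := hf'K i₀ (le_max_left _ _)
    simp only [hf', if_pos ha] at hatrue
    exact Bool.false_ne_true hatrue
  rw [isMeagre_iff_countable_union_isNowhereDense]
  exact ⟨{K}, by simpa using hnwd, countable_singleton _, by simp⟩

/-- Given a closed nowhere dense set `C` and `f`, we can modify `f` beyond `n` so that
a whole cylinder avoids `C`. -/
lemma dodge_single {C : Set (ℕ → Bool)} (hC : IsClosed C) (hnwd : IsNowhereDense C)
    (f : ℕ → Bool) (n : ℕ) :
    ∃ m, n < m ∧ ∃ g : ℕ → Bool, (∀ j, j ≤ n → g j = f j) ∧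
      ∀ h : ℕ → Bool, (∀ j, j ≤ m → h j = g j) → h ∉ C := by
  have hcd : IsOpen Cᶜ ∧ Dense Cᶜ := isClosed_isNowhereDense_iff_compl.mp ⟨hC, hnwd⟩
  have hne : (Cyl (Finset.range (n+1)) f).Nonempty := ⟨f, self_mem_cyl _ _⟩
  obtain ⟨g, hg1, hg2⟩ := hcd.2.inter_open_nonempty _ (isOpen_cyl _ _) hne
  obtain ⟨s, hs⟩ := exists_cyl_subset hcd.1 hg2
  refine ⟨n + 1 + s.sup id, by omega, g, ?_, ?_⟩
  · intro j hj
    exact hg1 j (Finset.mem_range.mpr (by omega))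
  · intro h hh
    have : h ∈ Cyl s g := by
      intro j hj
      exact hh j (by have := Finset.le_sup (f := id) hj; simp at this; omega)
    exact hs this

/-- Uniform version of `dodge_single`: one `m` works for all `f`. -/
lemma dodge_uniform {C : Set (ℕ → Bool)} (hC : IsClosed C) (hnwd : IsNowhereDense C) (n : ℕ) :
    ∃ m, n < m ∧ ∀ f : ℕ → Bool, ∃ g : ℕ → Bool, (∀ j, j ≤ n → g j = f j) ∧
      ∀ h : ℕ → Bool, (∀ j, j ≤ m → h j = g j) → h ∉ C := by
  classical
  have key : ∀ σ : Fin (n+1) → Bool, ∃ m, n < m ∧ ∃ g : ℕ → Bool,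
      (∀ j, j ≤ n → g j = (fun j => if h : j < n + 1 then σ ⟨j, h⟩ else false) j) ∧
      ∀ h : ℕ → Bool, (∀ j, j ≤ m → h j = g j) → h ∉ C :=
    fun σ => dodge_single hC hnwd _ n
  choose M hM1 G hG1 hG2 using key
  refine ⟨max (n+1) (Finset.univ.sup M), by omega, fun f => ?_⟩
  set σ : Fin (n+1) → Bool := fun i => f i.1 with hσ
  refine ⟨G σ, ?_, ?_⟩
  · intro j hj
    rw [hG1 σ j hj]
    simp only [hσ]
    rw [dif_pos (by omega)]
  · intro h hh
    apply hG2 σ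
    intro j hj
    apply hh
    have : M σ ≤ Finset.univ.sup M := Finset.le_sup (Finset.mem_univ σ)
    omega

lemma isNowhereDense_biUnion_finset {X : Type*} [TopologicalSpace X] {ι : Type*} (s : Finset ι)
    (f : ι → Set X) (h : ∀ i ∈ s, IsNowhereDense (f i)) : IsNowhereDense (⋃ i ∈ s, f i) := by
  classical
  induction s using Finset.induction_on with
  | empty => simp
  | @insert x s hx ih =>
    rw [Finset.set_biUnion_insert]
    exact (h x (Finset.mem_insert_self _ _)).union'
      (ih (fun i hi => h i (Finset.mem_insert_of_mem hi)))

/-- L2 (Talagrand, hard direction): a meagre, upward-closed subset of `2^ℕ` admits an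
interval witness. -/
lemma exists_intervals_of_isMeagre (S : Set (ℕ → Bool)) (hS : IsMeagre S)
    (hmono : ∀ f g : ℕ → Bool, (∀ j, f j = true → g j = true) → f ∈ S → g ∈ S) :
    ∃ n : ℕ → ℕ, StrictMono n ∧
      ∀ f ∈ S, ∃ N, ∀ i, N ≤ i → ∃ j, n i < j ∧ j ≤ n (i + 1) ∧ f j = true := by
  classical
  -- Step 1: an increasing cover of `S` by closed nowhere dense sets
  rw [isMeagre_iff_countable_union_isNowhereDense] at hS
  obtain ⟨T, hTnwd, hTc, hTsub⟩ := hS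
  obtain ⟨e, he⟩ := Set.Countable.exists_eq_range (hTc.insert ∅) (insert_nonempty _ _)
  have henwd : ∀ j, IsNowhereDense (e j) := by
    intro j
    have hj : e j ∈ insert ∅ T := he ▸ mem_range_self j
    rcases hj with h | h
    · rw [h]; exact isNowhereDense_empty
    · exact hTnwd _ h
  set D : ℕ → Set (ℕ → Bool) := fun i => closure (⋃ j ∈ Finset.range (i+1), e j) with hD
  have hDclosed : ∀ i, IsClosed (D i) := fun i => isClosed_closure
  have hDnwd : ∀ i, IsNowhereDense (D i) :=
    fun i => (isNowhereDense_biUnion_finset _ _ (fun j _ => henwd j)).closure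
  have hDmono : ∀ i i', i ≤ i' → D i ⊆ D i' := by
    intro i i' hii'
    apply closure_mono
    refine Set.biUnion_subset_biUnion_left ?_
    intro j hj
    have hj' : j < i + 1 := Finset.mem_range.mp hj
    exact Finset.mem_coe.mpr (Finset.mem_range.mpr (by omega))
  have hDcover : S ⊆ ⋃ i, D i := by
    intro f hf
    obtain ⟨t, htT, hft⟩ := hTsub hf
    have : t ∈ range e := he ▸ mem_insert_of_mem _ htT
    obtain ⟨j, rfl⟩ := this
    exact mem_iUnion.mpr ⟨j, subset_closure (Set.mem_biUnion (Finset.self_mem_range_succ j) hft)⟩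
  -- Step 2: the sequence of interval endpoints
  set nseq : ℕ → ℕ := fun i => Nat.rec 0
    (fun i prev => (dodge_uniform (hDclosed i) (hDnwd i) prev).choose) i with hnseq
  have hn1 : ∀ i, nseq i < nseq (i+1) :=
    fun i => (dodge_uniform (hDclosed i) (hDnwd i) (nseq i)).choose_spec.1
  have hGspec : ∀ i (f : ℕ → Bool), ∃ g : ℕ → Bool, (∀ j, j ≤ nseq i → g j = f j) ∧
      ∀ h, (∀ j, j ≤ nseq (i+1) → h j = g j) → h ∉ D i :=
    fun i f => (dodge_uniform (hDclosed i) (hDnwd i) (nseq i)).choose_spec.2 f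
  choose G hGa hGb using hGspec
  have hmonoseq : StrictMono nseq := strictMono_nat_of_lt_succ hn1
  refine ⟨nseq, hmonoseq, ?_⟩
  intro f hf
  by_contra hev
  push_neg at hev
  -- extract an increasing sequence of "missed" intervals
  have hev' : ∀ N, ∃ i, N ≤ i ∧ ∀ j, nseq i < j → j ≤ nseq (i+1) → f j = false := by
    intro N
    obtain ⟨i, hi1, hi2⟩ := hev N
    refine ⟨i, hi1, fun j h1 h2 => ?_⟩
    have := hi2 j h1 h2
    simpa using this
  choose pick hpick1 hpick2 using hev'
  set idx : ℕ → ℕ := fun t => Nat.rec (pick 0) (fun _ prev => pick (prev + 1)) t with hidx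
  have hidx1 : ∀ t, idx t < idx (t+1) :=
    fun t => lt_of_lt_of_le (Nat.lt_succ_self _) (hpick1 (idx t + 1))
  have hidxmono : StrictMono idx := strictMono_nat_of_lt_succ hidx1
  have hidxprop : ∀ t, ∀ j, nseq (idx t) < j → j ≤ nseq (idx t + 1) → f j = false := by
    intro t
    cases t with
    | zero => exact hpick2 0
    | succ t => exact hpick2 (idx t + 1)
  -- the successive modifications
  set hseq : ℕ → ℕ → Bool := fun t => Nat.rec (motive := fun _ => ℕ → Bool) f
    (fun t prev j => if nseq (idx t) < j ∧ j ≤ nseq (idx t + 1)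
      then G (idx t) prev j else prev j) t with hhseq
  have hseq_succ : ∀ t j, hseq (t+1) j = if nseq (idx t) < j ∧ j ≤ nseq (idx t + 1)
      then G (idx t) (hseq t) j else hseq t j := fun t j => rfl
  have stab : ∀ s t, t ≤ s → ∀ j, j ≤ nseq (idx t) → hseq s j = hseq t j := by
    intro s
    induction s with
    | zero =>
      intro t ht j hj
      have : t = 0 := by omega
      rw [this]
    | succ s ih =>
      intro t ht j hj
      rcases Nat.eq_or_lt_of_le ht with h | h
      · rw [h]
      · have ht' : t ≤ s := by omega
        rw [hseq_succ, if_neg, ih t ht' j hj]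
        rintro ⟨h1, _⟩
        have : nseq (idx t) ≤ nseq (idx s) := hmonoseq.monotone (hidxmono.monotone ht')
        omega
  have hle_nseq_idx : ∀ u, u ≤ nseq (idx u) :=
    fun u => le_trans hidxmono.le_apply hmonoseq.le_apply
  set H : ℕ → Bool := fun j => hseq (j+1) j with hHdef
  have hH : ∀ t j, j ≤ nseq (idx t) → H j = hseq t j := by
    intro t j hj
    rcases le_total t (j+1) with h | h
    · exact stab (j+1) t h j hj
    · refine (stab t (j+1) h j ?_).symm
      have := hle_nseq_idx (j+1)
      omega
  have hdodge : ∀ t, H ∉ D (idx t) := by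
    intro t
    apply hGb (idx t) (hseq t)
    intro j hj
    rcases le_or_gt j (nseq (idx t)) with h | h
    · rw [hH t j h]
      exact (hGa (idx t) (hseq t) j h).symm
    · have hj' : j ≤ nseq (idx (t+1)) :=
        le_trans hj (hmonoseq.monotone (hidx1 t))
      have : H j = hseq (t+1) j := hH (t+1) j hj'
      rw [this, hseq_succ, if_pos ⟨h, hj⟩]
  have hext : ∀ j, f j = true → H j = true := by
    intro j hjf
    have key : ∀ s, hseq s j = true := by
      intro s
      induction s with
      | zero => exact hjf
      | succ s ih =>
        rw [hseq_succ, if_neg]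
        · exact ih
        · rintro ⟨h1, h2⟩
          exact absurd (hidxprop s j h1 h2) (by simp [hjf])
    exact key (j+1)
  have hHS : H ∈ S := hmono f H hext hf
  obtain ⟨i, hi⟩ := mem_iUnion.mp (hDcover hHS)
  exact hdodge i (hDmono i (idx i) hidxmono.le_apply hi)

lemma IsMeagre.preimage_homeo {X Y : Type*} [TopologicalSpace X] [TopologicalSpace Y]
    (e : X ≃ₜ Y) {s : Set Y} (hs : IsMeagre s) : IsMeagre (e ⁻¹' s) := by
  rw [isMeagre_iff_countable_union_isNowhereDense] at hs ⊢
  obtain ⟨T, h1, h2, h3⟩ := hs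
  refine ⟨(fun t => e ⁻¹' t) '' T, ?_, h2.image _, ?_⟩
  · rintro _ ⟨t, ht, rfl⟩
    have hnwd := h1 t ht
    rw [IsNowhereDense] at hnwd ⊢
    rw [← e.preimage_closure, ← e.preimage_interior, hnwd, preimage_empty]
  · intro f hf
    obtain ⟨t, htT, hft⟩ := h3 hf
    exact ⟨e ⁻¹' t, mem_image_of_mem _ htT, hft⟩

/-- The homeomorphism `2^ℕ ≃ 2^(ℕ×ℕ)` induced by a bijection `ℕ ≃ ℕ×ℕ`. -/
noncomputable def cantorHomeo (ε : ℕ ≃ ℕ × ℕ) : (ℕ → Bool) ≃ₜ (ℕ × ℕ → Bool) where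
  toFun := fun f p => f (ε.symm p)
  invFun := fun g k => g (ε k)
  left_inv := fun f => by ext k; simp
  right_inv := fun g => by ext p; simp
  continuous_toFun := continuous_pi (fun p => continuous_apply _)
  continuous_invFun := continuous_pi (fun k => continuous_apply _)

lemma filterSet_mono (F : Filter ℕ) :
    ∀ f g : ℕ → Bool, (∀ j, f j = true → g j = true) → f ∈ filterSet F → g ∈ filterSet F :=
  fun f g hfg hf => F.sets_of_superset hf (fun k hk => hfg k hk)

/-- Direction A: if `F` is meagre then so is `F^(ω)`. -/
lemma meagre_pow_of_meagre (F : Filter ℕ) (hA : IsMeagre (filterSet F)) :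
    IsMeagre (powFilterSet F) := by
  obtain ⟨n, hmono, hmeet⟩ := exists_intervals_of_isMeagre _ hA (filterSet_mono F)
  set A : ℕ → Finset (ℕ × ℕ) :=
    fun i => (Finset.Ioc (n i) (n (i+1))).image (fun k => ((0:ℕ), k)) with hA'
  have hd : ∀ s t, s ≠ t → Disjoint (A s) (A t) := by
    intro s t hst
    rw [Finset.disjoint_left]
    rintro p hp hp'
    simp only [hA', Finset.mem_image, Finset.mem_Ioc] at hp hp'
    obtain ⟨k, ⟨hk1, hk2⟩, rfl⟩ := hp
    obtain ⟨k', ⟨hk1', hk2'⟩, hk'⟩ := hp'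
    have : k' = k := (Prod.mk.injEq _ _ _ _ ▸ hk' : (0:ℕ) = 0 ∧ k' = k).2
    subst this
    rcases Nat.lt_or_ge s t with h | h
    · have : n (s+1) ≤ n t := hmono.monotone h
      omega
    · have hts : t < s := by omega
      have : n (t+1) ≤ n s := hmono.monotone hts
      omega
  refine IsMeagre.mono ?_ (isMeagre_of_disjoint_family A hd)
  intro g hg
  obtain ⟨N, hN⟩ := hmeet (fun k => g (0, k)) (hg 0)
  refine ⟨N, fun i hi => ?_⟩
  obtain ⟨j, h1, h2, h3⟩ := hN i hi
  exact ⟨(0, j), by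
    simp only [hA', Finset.mem_image, Finset.mem_Ioc]
    exact ⟨j, ⟨h1, h2⟩, rfl⟩, h3⟩

/-- Direction B: if `F^(ω)` is meagre then so is `F`. -/
lemma meagre_of_meagre_pow (F : Filter ℕ) (hfree : F ≤ Filter.cofinite)
    (hB : IsMeagre (powFilterSet F)) : IsMeagre (filterSet F) := by
  classical
  by_contra hnm
  -- (★): since F is non-meagre, no disjoint family is "eventually met" by all of F
  have hstar : ∀ a : ℕ → Finset ℕ, (∀ s t, s ≠ t → Disjoint (a s) (a t)) →
      ∃ Y, Y ∈ F ∧ {t | ∀ j ∈ a t, j ∉ Y}.Infinite := by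
    intro a hd
    by_contra hcon
    push_neg at hcon
    apply hnm
    refine IsMeagre.mono ?_ (isMeagre_of_disjoint_family a hd)
    intro f hf
    have hfin : {t | ∀ j ∈ a t, j ∉ {n | f n = true}}.Finite :=
      hcon {n | f n = true} hf
    obtain ⟨M, hM⟩ := hfin.bddAbove
    refine ⟨M + 1, fun i hi => ?_⟩
    by_contra hno
    push_neg at hno
    have hmem : i ∈ {t | ∀ j ∈ a t, j ∉ {n | f n = true}} := by
      intro j hj hjY
      exact hno j hj hjY
    have := hM hmem
    omega
  -- transport the meagreness of `F^(ω)` to `2^ℕ`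
  set ε : ℕ ≃ ℕ × ℕ := (Denumerable.eqv (ℕ × ℕ)).symm with hε
  set φ := cantorHomeo ε with hφ
  have hSmeagre : IsMeagre (φ ⁻¹' powFilterSet F) := IsMeagre.preimage_homeo φ hB
  have hSmono : ∀ f g : ℕ → Bool, (∀ j, f j = true → g j = true) →
      f ∈ φ ⁻¹' powFilterSet F → g ∈ φ ⁻¹' powFilterSet F := by
    intro f g hfg hfS m
    exact F.sets_of_superset (hfS m) (fun k hk => hfg _ hk)
  obtain ⟨n, hnmono, hmeet⟩ := exists_intervals_of_isMeagre _ hSmeagre hSmono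
  set J : ℕ → Finset (ℕ × ℕ) := fun i => (Finset.Ioc (n i) (n (i+1))).image ε with hJ
  have hJdisj : ∀ s t, s ≠ t → Disjoint (J s) (J t) := by
    intro s t hst
    rw [Finset.disjoint_left]
    rintro p hp hp'
    simp only [hJ, Finset.mem_image, Finset.mem_Ioc] at hp hp'
    obtain ⟨k, ⟨hk1, hk2⟩, rfl⟩ := hp
    obtain ⟨k', ⟨hk1', hk2'⟩, hk'⟩ := hp'
    have hkk : k' = k := ε.injective hk'
    subst hkk
    rcases Nat.lt_or_ge s t with h | h
    · have : n (s+1) ≤ n t := hnmono.monotone h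
      omega
    · have hts : t < s := by omega
      have : n (t+1) ≤ n s := hnmono.monotone hts
      omega
  have hJmeet : ∀ g, g ∈ powFilterSet F → ∃ N, ∀ i, N ≤ i → ∃ p ∈ J i, g p = true := by
    intro g hg
    have hgS : (fun k => g (ε k)) ∈ φ ⁻¹' powFilterSet F := by
      have heq : φ (fun k => g (ε k)) = g := by
        ext p
        simp [hφ, cantorHomeo]
      show φ (fun k => g (ε k)) ∈ powFilterSet F
      rw [heq]
      exact hg
    obtain ⟨N, hN⟩ := hmeet _ hgS
    refine ⟨N, fun i hi => ?_⟩
    obtain ⟨j, h1, h2, h3⟩ := hN i hi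
    exact ⟨ε j, Finset.mem_image_of_mem _ (Finset.mem_Ioc.mpr ⟨h1, h2⟩), h3⟩
  -- the combinatorial construction
  set colsLow : ℕ → ℕ → Finset ℕ :=
    fun i B => ((J i).filter (fun p => p.1 ≤ B)).image Prod.snd with hcolsLow
  set coln : ℕ → ℕ → Finset ℕ :=
    fun i m => ((J i).filter (fun p => p.1 = m)).image Prod.snd with hcoln
  have hpick : ∀ (B : ℕ) (D : Finset ℕ) (N : ℕ), ∃ i, N ≤ i ∧
      ∀ p ∈ J i, p.1 ≤ B → p.2 ∉ D := by
    intro B D N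
    have hbad : {i : ℕ | ∃ p ∈ J i, p.1 ≤ B ∧ p.2 ∈ D}.Finite := by
      have hch : ∀ i : {i : ℕ // ∃ p ∈ J i, p.1 ≤ B ∧ p.2 ∈ D},
          ∃ p : ℕ × ℕ, p ∈ J i.1 ∧ p.1 ≤ B ∧ p.2 ∈ D := by
        intro i
        obtain ⟨p, hp1, hp2⟩ := i.2
        exact ⟨p, hp1, hp2⟩
      choose ψ hψ1 hψ2 using hch
      have hinj : Function.Injective (fun i => (⟨ψ i, Finset.mem_product.mpr
          ⟨Finset.mem_range.mpr (by have := (hψ2 i).1; omega), (hψ2 i).2⟩⟩ :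
            {p // p ∈ Finset.range (B+1) ×ˢ D})) := by
        intro i j hij
        simp only [Subtype.mk.injEq] at hij
        apply Subtype.ext
        by_contra hne
        exact Finset.disjoint_left.mp (hJdisj _ _ hne) (hψ1 i) (hij ▸ hψ1 j)
      have : Finite {i : ℕ // ∃ p ∈ J i, p.1 ≤ B ∧ p.2 ∈ D} := Finite.of_injective _ hinj
      exact Set.finite_coe_iff.mp this
    obtain ⟨M, hM⟩ := hbad.bddAbove
    refine ⟨max N (M+1), le_max_left _ _, ?_⟩
    intro p hp hp1 hp2
    have hmem : max N (M+1) ∈ {i : ℕ | ∃ p ∈ J i, p.1 ≤ B ∧ p.2 ∈ D} := ⟨p, hp, hp1, hp2⟩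
    have := hM hmem
    omega
  -- stage recursion: (index, row bound, used columns)
  set st : ℕ → ℕ × ℕ × Finset ℕ := fun t => Nat.rec
      ((0 : ℕ), (J 0).sup Prod.fst, (∅ : Finset ℕ))
      (fun _ prev =>
        ((hpick prev.2.1 prev.2.2 (prev.1 + 1)).choose,
         max (prev.2.1 + 1) ((J ((hpick prev.2.1 prev.2.2 (prev.1 + 1)).choose)).sup Prod.fst),
         prev.2.2 ∪ colsLow ((hpick prev.2.1 prev.2.2 (prev.1 + 1)).choose) prev.2.1)) t
    with hst
  set idx : ℕ → ℕ := fun t => (st t).1 with hidxdef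
  set Bf : ℕ → ℕ := fun t => (st t).2.1 with hBdef
  set Df : ℕ → Finset ℕ := fun t => (st t).2.2 with hDdef
  set a : ℕ → Finset ℕ := fun t => colsLow (idx (t+1)) (Bf t) with ha
  have hidxlt : ∀ t, idx t < idx (t+1) := fun t =>
    lt_of_lt_of_le (Nat.lt_succ_self _) (hpick (Bf t) (Df t) (idx t + 1)).choose_spec.1
  have hidxmono : StrictMono idx := strictMono_nat_of_lt_succ hidxlt
  have hidxspec : ∀ t, ∀ p ∈ J (idx (t+1)), p.1 ≤ Bf t → p.2 ∉ Df t := fun t =>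
    (hpick (Bf t) (Df t) (idx t + 1)).choose_spec.2
  have hBlt : ∀ t, Bf t < Bf (t+1) := fun t =>
    lt_of_lt_of_le (Nat.lt_succ_self _) (le_max_left _ _)
  have hBmono : StrictMono Bf := strictMono_nat_of_lt_succ hBlt
  have hrow : ∀ t, ∀ p ∈ J (idx (t+1)), p.1 ≤ Bf (t+1) := fun t p hp =>
    le_trans (Finset.le_sup hp) (le_max_right _ _)
  have hDstep : ∀ t, Df (t+1) = Df t ∪ a t := fun t => rfl
  have hDsub : ∀ s t, s ≤ t → Df s ⊆ Df t := by
    intro s t hst'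
    induction t with
    | zero => have : s = 0 := by omega
              rw [this]
    | succ t ih =>
      rcases Nat.eq_or_lt_of_le hst' with h | h
      · rw [h]
      · exact subset_trans (ih (by omega)) (by rw [hDstep t]; exact Finset.subset_union_left)
  have hasubD : ∀ t, a t ⊆ Df (t+1) := by
    intro t
    rw [hDstep t]
    exact Finset.subset_union_right
  have haD : ∀ t, ∀ j ∈ a t, j ∉ Df t := by
    intro t j hj
    simp only [ha, hcolsLow, Finset.mem_image, Finset.mem_filter] at hj
    obtain ⟨p, ⟨hp, hp1⟩, rfl⟩ := hj
    exact hidxspec t p hp hp1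
  have hadisj : ∀ s t, s ≠ t → Disjoint (a s) (a t) := by
    have key : ∀ s t, s < t → Disjoint (a s) (a t) := by
      intro s t hst'
      rw [Finset.disjoint_left]
      intro j hjs hjt
      exact haD t j hjt (hDsub (s+1) t (by omega) (hasubD s hjs))
    intro s t hst'
    rcases Nat.lt_or_ge s t with h | h
    · exact key s t h
    · exact (key t s (by omega)).symm
  obtain ⟨Y, hYF, hT⟩ := hstar a hadisj
  -- which stage handles row m
  have hBex : ∀ m : ℕ, ∃ t, m ≤ Bf t := fun m => ⟨m, hBmono.le_apply⟩
  set tfun : ℕ → ℕ := fun m => Nat.find (hBex m) with htfun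
  have htfun_spec : ∀ t m, Bf t < m → m ≤ Bf (t+1) → tfun m = t + 1 := by
    intro t m h1 h2
    apply le_antisymm
    · exact Nat.find_le h2
    · by_contra hlt
      push_neg at hlt
      have hsp : m ≤ Bf (tfun m) := Nat.find_spec (hBex m)
      have : Bf (tfun m) ≤ Bf t := hBmono.monotone (by omega)
      omega
  set g : ℕ × ℕ → Bool :=
    fun p => if p.2 ∈ Y ∧ p.2 ∉ coln (idx (tfun p.1)) p.1 then true else false with hg
  have hgpow : g ∈ powFilterSet F := by
    intro m
    have hset : {k | g (m, k) = true}
        = Y ∩ {k | k ∉ (coln (idx (tfun m)) m : Finset ℕ)} := by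
      ext k
      simp [hg]
    rw [hset]
    apply Filter.inter_mem hYF
    apply hfree
    rw [Filter.mem_cofinite]
    have hcompl : {k | k ∉ (coln (idx (tfun m)) m : Finset ℕ)}ᶜ
        = ((coln (idx (tfun m)) m : Finset ℕ) : Set ℕ) := by
      ext k; simp
    rw [hcompl]
    exact (coln _ _).finite_toSet
  obtain ⟨N, hN⟩ := hJmeet g hgpow
  obtain ⟨t, htT, htN⟩ := hT.exists_gt N
  have hidxbig : N ≤ idx (t+1) := by
    have h1 : t + 1 ≤ idx (t+1) := hidxmono.le_apply
    omega
  obtain ⟨p, hpJ, hptrue⟩ := hN (idx (t+1)) hidxbig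
  have hfalse : g p = false := by
    have hrowp := hrow t p hpJ
    rcases le_or_gt p.1 (Bf t) with hlow | hhigh
    · have hpa : p.2 ∈ a t := by
        simp only [ha, hcolsLow, Finset.mem_image, Finset.mem_filter]
        exact ⟨p, ⟨hpJ, hlow⟩, rfl⟩
      have hnotY : p.2 ∉ Y := htT p.2 hpa
      simp [hg, hnotY]
    · have heqt : tfun p.1 = t + 1 := htfun_spec t p.1 hhigh hrowp
      have hpc : p.2 ∈ coln (idx (tfun p.1)) p.1 := by
        rw [heqt]
        simp only [hcoln, Finset.mem_image, Finset.mem_filter]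
        exact ⟨p, ⟨hpJ, rfl⟩, rfl⟩
      simp [hg, hpc]
  rw [hptrue] at hfalse
  exact absurd hfalse (by simp)


/-- For a free filter `F` on `ℕ`, `F` is non-meager (in `2^ℕ`) if and only if `F^(ω)` is
non-meager (in `2^(ℕ×ℕ)`). -/
theorem nonmeager_iff_powFilter_nonmeager (F : Filter ℕ) (hproper : F.NeBot)
    (hfree : F ≤ Filter.cofinite) :
    ¬ IsMeagre (filterSet F) ↔ ¬ IsMeagre (powFilterSet F) := by
  constructor
  · intro h hpow
    exact h (meagre_of_meagre_pow F hfree hpow)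
  · intro h hF
    exact h (meagre_pow_of_meagre F hF)
end

section
/- Let F be a free filter on ℕ. Then F is a P-filter if and only if F^(ω) is a P-filter (on ℕ×ℕ). -/
open Filter Topology Set

/-- `F` is a P-filter: every countable family in `F` has a pseudointersection in `F`. -/
def IsPFilter {α : Type*} (F : Filter α) : Prop :=
  ∀ A : ℕ → Set α, (∀ n, A n ∈ F) → ∃ B ∈ F, ∀ n, (B \ A n).Finite

/-- The filter `F^(ω)` on `ℕ × ℕ`: a set belongs to it iff all of its sections
`{k | (n,k) ∈ x}` belong to `F`. -/
def powFilter (F : Filter ℕ) : Filter (ℕ × ℕ) where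
  sets := {x | ∀ n, {k | (n, k) ∈ x} ∈ F}
  univ_sets := fun _ => Filter.univ_mem
  sets_of_superset := fun hx hxy n => Filter.mem_of_superset (hx n) fun _ hk => hxy hk
  inter_sets := fun hx hy n => Filter.inter_mem (hx n) (hy n)

lemma mem_powFilter {F : Filter ℕ} {x : Set (ℕ × ℕ)} :
    x ∈ powFilter F ↔ ∀ n, {k | (n, k) ∈ x} ∈ F := Iff.rfl

/-- For a free filter `F` on `ℕ`, `F` is a P-filter if and only if `F^(ω)` is a P-filter. -/
theorem isPFilter_iff_powFilter_isPFilter (F : Filter ℕ) (hproper : F.NeBot)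
    (hfree : F ≤ Filter.cofinite) :
    IsPFilter F ↔ IsPFilter (powFilter F) := by
  constructor
  · intro hP A hA
    obtain ⟨C, hC, hCfin⟩ := hP
      (fun p => {k | ((Nat.unpair p).2, k) ∈ A (Nat.unpair p).1})
      (fun p => hA (Nat.unpair p).1 (Nat.unpair p).2)
    refine ⟨{q | q.2 ∈ C ∧ ∀ j < q.1, q ∈ A j}, ?_, ?_⟩
    · intro n
      have : {k | (n, k) ∈ {q : ℕ × ℕ | q.2 ∈ C ∧ ∀ j < q.1, q ∈ A j}} =
          C ∩ ⋂ j ∈ Finset.range n, {k | (n, k) ∈ A j} := by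
        ext k
        simp [Finset.mem_range]
      rw [show ({k | (n, k) ∈ {q : ℕ × ℕ | q.2 ∈ C ∧ ∀ j < q.1, q ∈ A j}} ∈ F) =
        (C ∩ ⋂ j ∈ Finset.range n, {k | (n, k) ∈ A j} ∈ F) from by rw [this]]
      exact inter_mem hC (Filter.biInter_finset_mem _ |>.mpr fun j _ => hA j n)
    · intro j
      have hsub : {q : ℕ × ℕ | q.2 ∈ C ∧ ∀ i < q.1, q ∈ A i} \ A j ⊆
          ⋃ n ∈ Finset.range (j + 1),
            (fun k => (n, k)) '' (C \ {k | (n, k) ∈ A j}) := by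
        rintro ⟨n, k⟩ ⟨⟨hkC, hall⟩, hnot⟩
        have hn : n ≤ j := by
          by_contra h
          exact hnot (hall j (by omega))
        simp only [Set.mem_iUnion, Finset.mem_range]
        exact ⟨n, by omega, ⟨k, ⟨hkC, hnot⟩, rfl⟩⟩
      refine Set.Finite.subset ?_ hsub
      apply Set.Finite.biUnion (Finset.range (j + 1)).finite_toSet
      intro n _
      apply Set.Finite.image
      have := hCfin (Nat.pair j n)
      simpa [Nat.unpair_pair] using this
  · intro hP A hA
    obtain ⟨B, hB, hBfin⟩ := hP (fun j => {q | q.2 ∈ A j}) (fun j n => hA j)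
    refine ⟨{k | (0, k) ∈ B}, hB 0, fun j => ?_⟩
    have heq : {k | (0, k) ∈ B} \ A j =
        (fun k => ((0 : ℕ), k)) ⁻¹' (B \ {q : ℕ × ℕ | q.2 ∈ A j}) := by
      ext k; simp [Set.mem_diff]
    rw [heq]
    exact (hBfin j).preimage (fun a _ b _ h => by simpa using h)
end

section
/- Let F be a free filter on ℕ. Then the space C_p(ξ(F), 2^ℕ) of continuous maps from ξ(F) to the Cantor set 2^ℕ, with the topology of pointwise convergence, is homeomorphic to F^ℕ, the countable power of F with the product topology. -/
open Filter Topology Set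

/-- The space `ξ(F) = ℕ ∪ {∞}`: every natural number is isolated and the neighborhoods of
`∞ = none` are exactly the sets `{∞} ∪ A` with `A ∈ F`. -/
def xiTop (F : Filter ℕ) : TopologicalSpace (Option ℕ) where
  IsOpen U := none ∈ U → {n | some n ∈ U} ∈ F
  isOpen_univ := fun _ => Filter.univ_mem
  isOpen_inter := fun U V hU hV hmem => Filter.inter_mem (hU hmem.1) (hV hmem.2)
  isOpen_sUnion := fun S hS hmem => by
    obtain ⟨U, hUS, hU⟩ := hmem
    exact Filter.mem_of_superset (hS U hUS hU) fun n hn => ⟨U, hUS, hn⟩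

/-- `C_p(X, 2^ℕ)`: continuous maps from `X` to the Cantor set with the topology of pointwise
convergence (subspace of the product `(2^ℕ)^X`). -/
abbrev CpCantor (X : Type*) [TopologicalSpace X] : Type _ :=
  {f : X → (ℕ → Bool) // Continuous f}

/-! ### Auxiliary lemmas and constructions -/

lemma xi_isOpen_iff (F : Filter ℕ) (U : Set (Option ℕ)) :
    IsOpen[xiTop F] U ↔ (none ∈ U → {n | some n ∈ U} ∈ F) := Iff.rfl

/-- A map `ξ(F) → 2^ℕ` is continuous iff for each coordinate `k`, the values at the isolated
points agree with the value at `∞` on a set in `F`. -/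
lemma continuous_xi_iff (F : Filter ℕ) (f : Option ℕ → ℕ → Bool) :
    Continuous[xiTop F, inferInstance] f ↔ ∀ k, {n | f (some n) k = f none k} ∈ F := by
  constructor
  · intro hf k
    have hU : IsOpen ((fun g : ℕ → Bool => g k) ⁻¹' {f none k}) :=
      (continuous_apply k).isOpen_preimage _ (isOpen_discrete _)
    have := (xi_isOpen_iff F _).mp (@Continuous.isOpen_preimage _ _ (xiTop F) _ f hf _ hU)
    exact this rfl
  · intro h
    rw [continuous_def]
    intro U hU
    rw [xi_isOpen_iff]
    intro hmem
    obtain ⟨I, u, hu, hsub⟩ := isOpen_pi_iff.mp hU (f none) hmem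
    have hA : (⋂ k ∈ I, {n | f (some n) k = f none k}) ∈ F :=
      (biInter_mem I.finite_toSet).mpr fun k _ => h k
    refine Filter.mem_of_superset hA fun n hn => ?_
    refine hsub fun k hk => ?_
    have := mem_iInter₂.mp hn k hk
    rw [Set.mem_setOf_eq] at this
    rw [this]
    exact (hu k hk).2

/-- `C_p(ξ(F), 2^ℕ) ≃ₜ 2^ℕ × F^ℕ`: a continuous map is determined by its value at `∞`
together with, for each coordinate `k`, the set (in `F`) where the values agree with the value
at `∞`. -/
noncomputable def e1 (F : Filter ℕ) :
    @CpCantor (Option ℕ) (xiTop F) ≃ₜ ((ℕ → Bool) × (ℕ → ↥(filterSet F))) where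
  toFun f := (f.1 none, fun k => ⟨fun n => decide (f.1 (some n) k = f.1 none k), by
    have := (continuous_xi_iff F f.1).mp f.2 k
    simpa [filterSet, Set.mem_setOf_eq, decide_eq_true_iff] using this⟩)
  invFun p := ⟨fun x => Option.elim x p.1 (fun n k => bif (p.2 k).1 n then p.1 k else !(p.1 k)), by
    rw [continuous_xi_iff]
    intro k
    refine Filter.mem_of_superset ((p.2 k).2) fun n hn => ?_
    simp only [Set.mem_setOf_eq] at hn ⊢
    simp [hn]⟩
  left_inv f := by
    apply Subtype.ext
    funext x
    cases x with
    | none => rfl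
    | some n =>
      funext k
      simp only [Option.elim]
      by_cases h : f.1 (some n) k = f.1 none k
      · simp [h]
      · revert h
        cases f.1 (some n) k <;> cases f.1 none k <;> simp
  right_inv p := by
    refine Prod.ext rfl ?_
    funext k
    apply Subtype.ext
    funext n
    simp only [Option.elim]
    by_cases h : ((p.2 k : ℕ → Bool) n) = true
    · simp only [h]; cases p.1 k <;> simp
    · rw [Bool.not_eq_true] at h; simp only [h]; cases p.1 k <;> simp
  continuous_toFun := by
    apply Continuous.prodMk
    · exact (continuous_apply none).comp continuous_subtype_val
    · refine continuous_pi fun k => Continuous.subtype_mk ?_ _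
      refine continuous_pi fun n => ?_
      have h1 : Continuous fun f : @CpCantor (Option ℕ) (xiTop F) =>
          (f.1 (some n) k, f.1 none k) :=
        (((continuous_apply k).comp ((continuous_apply (some n)).comp
          continuous_subtype_val))).prodMk
          (((continuous_apply k).comp ((continuous_apply none).comp continuous_subtype_val)))
      exact (continuous_of_discreteTopology
        (f := fun q : Bool × Bool => decide (q.1 = q.2))).comp h1
  continuous_invFun := by
    refine Continuous.subtype_mk ?_ _
    refine continuous_pi fun x => ?_
    cases x with
    | none => exact continuous_fst
    | some n =>
      refine continuous_pi fun k => ?_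
      have h1 : Continuous fun p : (ℕ → Bool) × (ℕ → ↥(filterSet F)) =>
          ((p.2 k).1 n, p.1 k) :=
        (((continuous_apply n).comp (continuous_subtype_val.comp
          ((continuous_apply k).comp continuous_snd)))).prodMk
          ((continuous_apply k).comp continuous_fst)
      exact (continuous_of_discreteTopology
        (f := fun q : Bool × Bool => bif q.1 then q.2 else !q.2)).comp h1

/-- The elements of `F` whose characteristic function is `true` at `0`. -/
def freeSlot (F : Filter ℕ) : Set (ℕ → Bool) := {g | {n | g n = true} ∈ F ∧ g 0 = true}

/-- Since a free filter is insensitive to the coordinate `0`, we can split off that bit: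
`F ≃ₜ 2 × F₁` where `F₁` is the part of `F` with coordinate `0` fixed to `true`. -/
noncomputable def e2 (F : Filter ℕ) (hfree : F ≤ Filter.cofinite) :
    ↥(filterSet F) ≃ₜ Bool × ↥(freeSlot F) where
  toFun g := (g.1 0, ⟨Function.update g.1 0 true, by
    constructor
    · refine Filter.mem_of_superset g.2 fun n hn => ?_
      rcases eq_or_ne n 0 with rfl | h
      · simp
      · simpa [Function.update_of_ne h] using hn
    · simp⟩)
  invFun p := ⟨Function.update p.2.1 0 p.1, by
    have h0 : {n : ℕ | n ≠ 0} ∈ F := by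
      apply hfree
      simp [Filter.mem_cofinite]
    refine Filter.mem_of_superset (Filter.inter_mem p.2.2.1 h0) fun n hn => ?_
    simp only [Set.mem_inter_iff, Set.mem_setOf_eq] at hn
    simpa [Function.update_of_ne hn.2] using hn.1⟩
  left_inv g := by
    apply Subtype.ext
    show Function.update (Function.update g.1 0 true) 0 (g.1 0) = g.1
    rw [Function.update_idem, Function.update_eq_self]
  right_inv p := by
    refine Prod.ext (by simp) ?_
    apply Subtype.ext
    show Function.update (Function.update p.2.1 0 p.1) 0 true = p.2.1
    rw [Function.update_idem]
    conv_lhs => rw [← p.2.2.2]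
    rw [Function.update_eq_self]
  continuous_toFun := by
    apply Continuous.prodMk
    · exact (continuous_apply 0).comp continuous_subtype_val
    · refine Continuous.subtype_mk (continuous_pi fun n => ?_) _
      rcases eq_or_ne n 0 with rfl | h
      · simp only [Function.update_self]; exact continuous_const
      · simp only [Function.update_of_ne h]
        exact (continuous_apply n).comp continuous_subtype_val
  continuous_invFun := by
    refine Continuous.subtype_mk (continuous_pi fun n => ?_) _
    rcases eq_or_ne n 0 with rfl | h
    · simp only [Function.update_self]; exact continuous_fst
    · simp only [Function.update_of_ne h]
      exact (continuous_apply n).comp (continuous_subtype_val.comp continuous_snd)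

/-- `(A × B)^ℕ ≃ₜ A^ℕ × B^ℕ`. -/
def prodArrowHomeo (A B : Type*) [TopologicalSpace A] [TopologicalSpace B] :
    (ℕ → A × B) ≃ₜ (ℕ → A) × (ℕ → B) where
  toEquiv := Equiv.arrowProdEquivProdArrow ℕ (fun _ => A) (fun _ => B)
  continuous_toFun :=
    (continuous_pi fun n => continuous_fst.comp (continuous_apply n)).prodMk
      (continuous_pi fun n => continuous_snd.comp (continuous_apply n))
  continuous_invFun := continuous_pi fun n =>
    ((continuous_apply n).comp continuous_fst).prodMk ((continuous_apply n).comp continuous_snd)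

/-- The Cantor set absorbs its own square. -/
noncomputable def cantorSquare : (ℕ → Bool) × (ℕ → Bool) ≃ₜ (ℕ → Bool) :=
  (Homeomorph.sumArrowHomeomorphProdArrow).symm.trans
    (Homeomorph.piCongrLeft (Y := fun _ => Bool) Equiv.natSumNatEquivNat)

/-- For a free filter `F` on `ℕ`, the space `C_p(ξ(F), 2^ℕ)` is homeomorphic to `F^ℕ`, the
countable power of `F ⊆ 2^ℕ` with the product topology. -/
theorem CpCantor_xi_homeomorph_pow (F : Filter ℕ) (hproper : F.NeBot)
    (hfree : F ≤ Filter.cofinite) :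
    letI := xiTop F
    Nonempty (CpCantor (Option ℕ) ≃ₜ (ℕ → ↥(filterSet F))) := by
  letI := xiTop F
  exact ⟨(e1 F).trans <|
    ((Homeomorph.refl (ℕ → Bool)).prodCongr
      (Homeomorph.piCongrRight fun _ => e2 F hfree)).trans <|
    ((Homeomorph.refl (ℕ → Bool)).prodCongr (prodArrowHomeo Bool ↥(freeSlot F))).trans <|
    (Homeomorph.prodAssoc _ _ _).symm.trans <|
    (cantorSquare.prodCongr (Homeomorph.refl _)).trans <|
    (prodArrowHomeo Bool ↥(freeSlot F)).symm.trans <|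
    Homeomorph.piCongrRight fun _ => (e2 F hfree).symm⟩
end

section
/- Let F be a free filter on ℕ, let h : Q → Q be a homeomorphism of the Hilbert cube, and let D ⊆ (-1,1)^ℕ be a countable dense subset of Q. Assume there is z ∈ C_F such that for every d ∈ D and every n ∈ ℕ, |d(n) − h(d)(n)| ≤ |z(n)|. Then h[K_F] = K_F. -/
/-!
The bound `|x(n) - h(x)(n)| ≤ |z(n)|` is a closed condition on `x`, so by density it holds on
all of `Q`. A point displaced coordinatewise by at most `|z|`, with `z ∈ K_F`, still
`F`-converges to `0`; applied to `h` and to `h⁻¹` this gives both inclusions.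
-/

open Filter Topology Set

/-- The Hilbert cube `Q = [-1,1]^ℕ` with the product topology. -/
abbrev Hcube : Type := {f : ℕ → ℝ // ∀ n, f n ∈ Set.Icc (-1 : ℝ) 1}

/-- `K_F`: the points of the Hilbert cube that `F`-converge to `0`. -/
def KF (F : Filter ℕ) : Set Hcube :=
  {f | ∀ m : ℕ, {n | |f.val n| < (1 / 2) ^ m} ∈ F}

/-- The pseudointerior `(-1,1)^ℕ` of the Hilbert cube. -/
def pseudoInt : Set Hcube := {f | ∀ n, |f.val n| < 1}

/-- `C_F = K_F ∩ (-1,1)^ℕ`. -/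
def CF (F : Filter ℕ) : Set Hcube := KF F ∩ pseudoInt

lemma mem_KF_of_abs_sub_le {F : Filter ℕ} {z f g : Hcube} (hz : z ∈ KF F) (hf : f ∈ KF F)
    (hfg : ∀ n, |f.val n - g.val n| ≤ |z.val n|) : g ∈ KF F := by
  intro m
  filter_upwards [hf (m + 1), hz (m + 1)] with n hfn hzn
  have htri : |g.val n| ≤ |f.val n| + |f.val n - g.val n| := by
    linarith [abs_sub_abs_le_abs_sub (g.val n) (f.val n), abs_sub_comm (g.val n) (f.val n)]
  calc |g.val n| ≤ |f.val n| + |f.val n - g.val n| := htri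
    _ < (1 / 2) ^ (m + 1) + (1 / 2) ^ (m + 1) := add_lt_add_of_lt_of_le hfn ((hfg n).trans hzn.le)
    _ = (1 / 2) ^ m := by ring

lemma Dense.abs_sub_le_of_forall_mem {X : Type*} [TopologicalSpace X] {u v : X → Hcube}
    (hu : Continuous u) (hv : Continuous v) {D : Set X} (hD : Dense D) (c : ℕ → ℝ)
    (hb : ∀ d ∈ D, ∀ n, |(u d).val n - (v d).val n| ≤ c n) (x : X) (n : ℕ) :
    |(u x).val n - (v x).val n| ≤ c n := by
  have hcoord : Continuous fun y : Hcube => y.val n :=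
    (continuous_apply n).comp continuous_subtype_val
  have hclosed : IsClosed {y : X | |(u y).val n - (v y).val n| ≤ c n} :=
    isClosed_le (((hcoord.comp hu).sub (hcoord.comp hv)).abs) continuous_const
  exact hclosed.closure_subset_iff.mpr (fun d hd => hb d hd n) (hD x)

theorem image_KF_of_dense_bound_general (F : Filter ℕ) (h : Hcube ≃ₜ Hcube)
    (D : Set Hcube) (hDdense : Dense D)
    (z : Hcube) (hz : z ∈ CF F)
    (hbound : ∀ d ∈ D, ∀ n : ℕ, |d.val n - (h d).val n| ≤ |z.val n|) :
    h '' KF F = KF F := by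
  have hall : ∀ x n, |x.val n - (h x).val n| ≤ |z.val n| :=
    hDdense.abs_sub_le_of_forall_mem continuous_id h.continuous _ hbound
  refine Subset.antisymm (image_subset_iff.2 fun f hf => mem_KF_of_abs_sub_le hz.1 hf (hall f))
    fun y hy => ⟨h.symm y, mem_KF_of_abs_sub_le hz.1 hy fun n => ?_, h.apply_symm_apply y⟩
  simpa only [h.apply_symm_apply, abs_sub_comm] using hall (h.symm y) n

/-- Let `h` be a homeomorphism of the Hilbert cube and `D ⊆ (-1,1)^ℕ` a countable dense
subset of `Q`. If there is `z ∈ C_F` such that `|d(n) - h(d)(n)| ≤ |z(n)|` for every `d ∈ D`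
and `n`, then `h[K_F] = K_F`. -/
theorem image_KF_of_dense_bound (F : Filter ℕ) (hproper : F.NeBot)
    (hfree : F ≤ Filter.cofinite) (h : Hcube ≃ₜ Hcube)
    (D : Set Hcube) (hDsub : D ⊆ pseudoInt) (hDc : D.Countable) (hDdense : Dense D)
    (z : Hcube) (hz : z ∈ CF F)
    (hbound : ∀ d ∈ D, ∀ n : ℕ, |d.val n - (h d).val n| ≤ |z.val n|) :
    h '' KF F = KF F :=
  image_KF_of_dense_bound_general F h D hDdense z hz hbound
end

section
/- Let F be a free filter on ℕ and let D ⊆ (-1,1)^ℕ be a countable set. Then there exists a homeomorphism h : Q → Q of the Hilbert cube such that h[D] is in general position, h[(-1,1)^ℕ] = (-1,1)^ℕ, and h[K_F] = K_F. -/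
open Filter Topology Set

/-- A subset of the Hilbert cube is in general position if distinct points differ in every
coordinate. -/
def GenPos (A : Set Hcube) : Prop :=
  ∀ x ∈ A, ∀ y ∈ A, x ≠ y → ∀ n : ℕ, x.val n ≠ y.val n

namespace GPaux

noncomputable section

/-- clamp to [-1/2, 1/2] -/
def clamp (s : ℝ) : ℝ := max (-(1/2)) (min s (1/2))

lemma clamp_abs_le (s : ℝ) : |clamp s| ≤ 1/2 := by
  rw [abs_le]; unfold clamp
  exact ⟨le_max_left _ _, max_le (by norm_num) (min_le_right _ _)⟩

lemma clamp_eq_self {s : ℝ} (h : |s| ≤ 1/2) : clamp s = s := by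
  rw [abs_le] at h; unfold clamp
  rw [min_eq_left h.2, max_eq_right h.1]

lemma clamp_abs_le_abs (s : ℝ) : |clamp s| ≤ |s| := by
  rcases le_or_gt (|s|) (1/2) with h | h
  · rw [clamp_eq_self h]
  · exact (clamp_abs_le s).trans h.le

lemma continuous_clamp : Continuous clamp :=
  continuous_const.max (continuous_id.min continuous_const)

/-- the basic shift homeomorphism of `[-1,1]` -/
def phi (s x : ℝ) : ℝ := x + clamp s * (1 - |x|)

/-- inverse of `phi s` -/
def psi (s y : ℝ) : ℝ :=
  if clamp s ≤ y then (y - clamp s) / (1 - clamp s) else (y - clamp s) / (1 + clamp s)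

lemma one_sub_clamp_pos (s : ℝ) : 0 < 1 - clamp s := by
  have := clamp_abs_le s; rw [abs_le] at this; linarith [this.2]

lemma one_add_clamp_pos (s : ℝ) : 0 < 1 + clamp s := by
  have := clamp_abs_le s; rw [abs_le] at this; linarith [this.1]

lemma phi_abs_le {x : ℝ} (hx : |x| ≤ 1) (s : ℝ) : |phi s x| ≤ 1 := by
  have h := clamp_abs_le s
  rw [abs_le] at h hx ⊢
  unfold phi
  rcases le_or_gt 0 x with h0 | h0
  · rw [abs_of_nonneg h0]; constructor <;> nlinarith
  · rw [abs_of_neg h0]; constructor <;> nlinarith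

lemma phi_sub_abs {x : ℝ} (hx : |x| ≤ 1) (s : ℝ) : |phi s x - x| ≤ |s| := by
  have h1 : phi s x - x = clamp s * (1 - |x|) := by unfold phi; ring
  rw [h1, abs_mul]
  have h2 : abs (1 - |x|) ≤ 1 := by
    rw [abs_le]; constructor
    · linarith
    · linarith [abs_nonneg x]
  calc |clamp s| * abs (1 - |x|) ≤ |s| * 1 :=
        mul_le_mul (clamp_abs_le_abs s) h2 (abs_nonneg _) (abs_nonneg _)
    _ = |s| := mul_one _

lemma psi_abs_le {y : ℝ} (hy : |y| ≤ 1) (s : ℝ) : |psi s y| ≤ 1 := by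
  have h := clamp_abs_le s
  have h1 := one_sub_clamp_pos s
  have h2 := one_add_clamp_pos s
  rw [abs_le] at h hy ⊢
  unfold psi
  split_ifs with hc
  · constructor
    · have : (0:ℝ) ≤ (y - clamp s) / (1 - clamp s) := div_nonneg (by linarith) h1.le
      linarith
    · rw [div_le_one h1]; linarith
  · constructor
    · rw [le_div_iff₀ h2]; linarith
    · rw [div_le_one h2]; linarith

lemma psi_sub_abs {y : ℝ} (hy : |y| ≤ 1) (s : ℝ) : |psi s y - y| ≤ |s| := by
  have h1 := one_sub_clamp_pos s
  have h2 := one_add_clamp_pos s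
  rw [abs_le] at hy
  have key : |psi s y - y| ≤ |clamp s| := by
    unfold psi
    split_ifs with hc
    · have he : (y - clamp s) / (1 - clamp s) - y = clamp s * (y - 1) / (1 - clamp s) := by
        field_simp; ring
      rw [he, abs_div, abs_mul, abs_of_pos h1]
      rw [div_le_iff₀ h1]
      have hy1 : |y - 1| ≤ 1 - clamp s := by rw [abs_le]; constructor <;> linarith
      nlinarith [abs_nonneg (clamp s), abs_nonneg (y - 1)]
    · push_neg at hc
      have he : (y - clamp s) / (1 + clamp s) - y = -(clamp s * (1 + y)) / (1 + clamp s) := by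
        field_simp; ring
      rw [he, abs_div, abs_neg, abs_mul, abs_of_pos h2]
      rw [div_le_iff₀ h2]
      have hy1 : |1 + y| ≤ 1 + clamp s := by rw [abs_le]; constructor <;> linarith
      nlinarith [abs_nonneg (clamp s), abs_nonneg (1 + y)]
  exact key.trans (clamp_abs_le_abs s)

lemma psi_phi {x : ℝ} (hx : |x| ≤ 1) (s : ℝ) : psi s (phi s x) = x := by
  have h1 := one_sub_clamp_pos s
  have h2 := one_add_clamp_pos s
  rw [abs_le] at hx
  unfold phi psi
  rcases le_or_gt 0 x with h0 | h0
  · rw [abs_of_nonneg h0]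
    rw [if_pos (by nlinarith)]
    field_simp; ring
  · rw [abs_of_neg h0]
    rw [if_neg (by push_neg; nlinarith)]
    field_simp; ring

lemma phi_psi {y : ℝ} (hy : |y| ≤ 1) (s : ℝ) : phi s (psi s y) = y := by
  have h1 := one_sub_clamp_pos s
  have h2 := one_add_clamp_pos s
  rw [abs_le] at hy
  unfold phi psi
  split_ifs with hc
  · have hnn : (0:ℝ) ≤ (y - clamp s) / (1 - clamp s) := div_nonneg (by linarith) h1.le
    rw [abs_of_nonneg hnn]
    field_simp; ring
  · push_neg at hc
    have hneg : (y - clamp s) / (1 + clamp s) < 0 := div_neg_of_neg_of_pos (by linarith) h2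
    rw [abs_of_neg hneg]
    field_simp; ring

lemma phi_inj {a b : ℝ} (s : ℝ) (h : phi s a = phi s b) : a = b := by
  unfold phi at h
  have h1 : a - b = clamp s * (|a| - |b|) := by linarith [h]
  have h2 : |a - b| ≤ (1/2) * |a - b| := by
    calc |a - b| = |clamp s| * abs (|a| - |b|) := by rw [h1, abs_mul]
      _ ≤ (1/2) * |a - b| := by
          apply mul_le_mul (clamp_abs_le s) (abs_abs_sub_abs_le_abs_sub a b)
            (abs_nonneg _) (by norm_num)
  have := abs_nonneg (a - b)
  have h3 : |a - b| = 0 := by linarith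
  have := abs_eq_zero.mp h3; linarith

lemma phi_lt_one_iff {x : ℝ} (hx : |x| ≤ 1) (s : ℝ) : |phi s x| < 1 ↔ |x| < 1 := by
  have h := clamp_abs_le s
  rw [abs_le] at h
  constructor
  · intro hp
    by_contra hc
    push_neg at hc
    have hx1 : |x| = 1 := le_antisymm hx hc
    rcases abs_eq (by norm_num : (0:ℝ) ≤ 1) |>.mp hx1 with h1 | h1
    · subst h1; unfold phi at hp; simp at hp
    · subst h1; unfold phi at hp; simp at hp
  · intro hp
    rw [abs_lt] at hp ⊢
    unfold phi
    rcases le_or_gt 0 x with h0 | h0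
    · rw [abs_of_nonneg h0]; constructor <;> nlinarith
    · rw [abs_of_neg h0]; constructor <;> nlinarith

lemma continuous_phi : Continuous (fun p : ℝ × ℝ => phi p.1 p.2) := by
  unfold phi
  exact continuous_snd.add ((continuous_clamp.comp continuous_fst).mul
    (continuous_const.sub continuous_snd.abs))

lemma continuous_psi : Continuous (fun p : ℝ × ℝ => psi p.1 p.2) := by
  unfold psi
  apply Continuous.if_le
  · apply Continuous.div (continuous_snd.sub (continuous_clamp.comp continuous_fst))
      (continuous_const.sub (continuous_clamp.comp continuous_fst))
    intro p; exact (one_sub_clamp_pos p.1).ne'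
  · apply Continuous.div (continuous_snd.sub (continuous_clamp.comp continuous_fst))
      (continuous_const.add (continuous_clamp.comp continuous_fst))
    intro p; exact (one_add_clamp_pos p.1).ne'
  · exact continuous_clamp.comp continuous_fst
  · exact continuous_snd
  · intro p hp; rw [hp]; simp
lemma coord_abs_le (f : Hcube) (n : ℕ) : |f.val n| ≤ 1 :=
  abs_le.mpr ⟨(f.2 n).1, (f.2 n).2⟩

section Skew

variable (b : ℕ → Bool) (w : ℕ → ℝ) (c : ℕ → ℝ)

/-- the parameter functional: a weighted sum over the untouched coordinates -/
def sigma (f : Hcube) : ℝ := ∑' k, (if b k = true then 0 else (1/2:ℝ)^k * w k * f.val k)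

variable {w}

lemma sigma_term_bound (hw : ∀ k, 1 ≤ w k ∧ w k ≤ 2) (f : Hcube) (k : ℕ) :
    ‖if b k = true then 0 else (1/2:ℝ)^k * w k * f.val k‖ ≤ (1/2:ℝ)^k * 2 := by
  have hp : (0:ℝ) ≤ (1/2:ℝ)^k := by positivity
  split_ifs with hb
  · simp only [norm_zero]; positivity
  · rw [Real.norm_eq_abs, abs_mul, abs_mul]
    have h1 : |(1/2:ℝ)^k| = (1/2:ℝ)^k := abs_of_nonneg hp
    have h2 : |w k| ≤ 2 := by
      rw [abs_le]; exact ⟨by linarith [(hw k).1], (hw k).2⟩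
    have h3 := coord_abs_le f k
    rw [h1]
    calc (1/2:ℝ)^k * |w k| * |f.val k| ≤ (1/2:ℝ)^k * 2 * 1 := by
          apply mul_le_mul (by apply mul_le_mul_of_nonneg_left h2 hp) h3 (abs_nonneg _)
          positivity
      _ = (1/2:ℝ)^k * 2 := by ring

lemma summable_half_two : Summable (fun k : ℕ => (1/2:ℝ)^k * 2) :=
  (summable_geometric_of_lt_one (by norm_num) (by norm_num)).mul_right 2

lemma sigma_summable (hw : ∀ k, 1 ≤ w k ∧ w k ≤ 2) (f : Hcube) :
    Summable (fun k => if b k = true then 0 else (1/2:ℝ)^k * w k * f.val k) :=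
  Summable.of_norm_bounded summable_half_two (sigma_term_bound b hw f)

lemma sigma_abs_le (hw : ∀ k, 1 ≤ w k ∧ w k ≤ 2) (f : Hcube) : |sigma b w f| ≤ 4 := by
  have hs : HasSum (fun k : ℕ => (1/2:ℝ)^k * 2) 4 := by
    have := (hasSum_geometric_of_lt_one (by norm_num : (0:ℝ) ≤ 1/2)
      (by norm_num : (1/2:ℝ) < 1)).mul_right 2
    rw [show (4:ℝ) = (1 - 1/2)⁻¹ * 2 by norm_num]; exact this
  exact tsum_of_norm_bounded hs (sigma_term_bound b hw f)

lemma sigma_congr {x y : Hcube} (hagree : ∀ k, b k = false → x.val k = y.val k) :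
    sigma b w x = sigma b w y := by
  unfold sigma
  apply tsum_congr
  intro k
  rcases hbk : b k with _ | _
  · simp only [Bool.false_eq_true, if_false, hagree k hbk]
  · simp [hbk]

lemma sigma_continuous (hw : ∀ k, 1 ≤ w k ∧ w k ≤ 2) : Continuous (sigma b w) := by
  unfold sigma
  apply continuous_tsum _ summable_half_two
  · intro k f; exact sigma_term_bound b hw f k
  · intro k
    rcases hbk : b k with _ | _
    · simp only [hbk, Bool.false_eq_true, if_false]
      exact continuous_const.mul ((continuous_apply k).comp continuous_subtype_val)
    · simp only [hbk, if_true]; exact continuous_const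

variable (w)

/-- the skew shift map -/
def G (f : Hcube) : Hcube :=
  ⟨fun n => if b n = true then phi (c n * sigma b w f) (f.val n) else f.val n, by
    intro n
    rw [Set.mem_Icc, ← abs_le]
    dsimp only
    split_ifs with hb
    · exact phi_abs_le (coord_abs_le f n) _
    · exact coord_abs_le f n⟩

/-- the inverse skew shift map -/
def G' (g : Hcube) : Hcube :=
  ⟨fun n => if b n = true then psi (c n * sigma b w g) (g.val n) else g.val n, by
    intro n
    rw [Set.mem_Icc, ← abs_le]
    dsimp only
    split_ifs with hb
    · exact psi_abs_le (coord_abs_le g n) _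
    · exact coord_abs_le g n⟩

lemma G_coord_false {n : ℕ} (hb : b n = false) (f : Hcube) :
    (G b w c f).val n = f.val n := by simp [G, hb]

lemma G_coord_true {n : ℕ} (hb : b n = true) (f : Hcube) :
    (G b w c f).val n = phi (c n * sigma b w f) (f.val n) := by simp [G, hb]

lemma G'_coord_false {n : ℕ} (hb : b n = false) (g : Hcube) :
    (G' b w c g).val n = g.val n := by simp [G', hb]

lemma G'_coord_true {n : ℕ} (hb : b n = true) (g : Hcube) :
    (G' b w c g).val n = psi (c n * sigma b w g) (g.val n) := by simp [G', hb]

lemma sigma_G (f : Hcube) : sigma b w (G b w c f) = sigma b w f :=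
  sigma_congr b (fun k hbk => G_coord_false b w c hbk f)

lemma sigma_G' (g : Hcube) : sigma b w (G' b w c g) = sigma b w g :=
  sigma_congr b (fun k hbk => G'_coord_false b w c hbk g)

lemma G'_G (f : Hcube) : G' b w c (G b w c f) = f := by
  apply Subtype.ext; funext n
  rcases hb : b n with _ | _
  · rw [G'_coord_false b w c hb, G_coord_false b w c hb]
  · rw [G'_coord_true b w c hb, sigma_G, G_coord_true b w c hb,
      psi_phi (coord_abs_le f n)]

lemma G_G' (g : Hcube) : G b w c (G' b w c g) = g := by
  apply Subtype.ext; funext n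
  rcases hb : b n with _ | _
  · rw [G_coord_false b w c hb, G'_coord_false b w c hb]
  · rw [G_coord_true b w c hb, sigma_G', G'_coord_true b w c hb,
      phi_psi (coord_abs_le g n)]

variable {w}

lemma G_continuous (hw : ∀ k, 1 ≤ w k ∧ w k ≤ 2) : Continuous (G b w c) := by
  apply Continuous.subtype_mk
  apply continuous_pi
  intro n
  rcases hb : b n with _ | _
  · simp only [hb, Bool.false_eq_true, if_false]
    exact (continuous_apply n).comp continuous_subtype_val
  · simp only [hb, if_true]
    exact continuous_phi.comp (((continuous_const.mul (sigma_continuous b hw)).prodMk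
      ((continuous_apply n).comp continuous_subtype_val)))

lemma G'_continuous (hw : ∀ k, 1 ≤ w k ∧ w k ≤ 2) : Continuous (G' b w c) := by
  apply Continuous.subtype_mk
  apply continuous_pi
  intro n
  rcases hb : b n with _ | _
  · simp only [hb, Bool.false_eq_true, if_false]
    exact (continuous_apply n).comp continuous_subtype_val
  · simp only [hb, if_true]
    exact continuous_psi.comp (((continuous_const.mul (sigma_continuous b hw)).prodMk
      ((continuous_apply n).comp continuous_subtype_val)))

variable (w)

/-- the skew shift homeomorphism -/
def Ghomeo (hw : ∀ k, 1 ≤ w k ∧ w k ≤ 2) : Hcube ≃ₜ Hcube where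
  toFun := G b w c
  invFun := G' b w c
  left_inv := G'_G b w c
  right_inv := G_G' b w c
  continuous_toFun := G_continuous b c hw
  continuous_invFun := G'_continuous b c hw

lemma Ghomeo_apply (hw : ∀ k, 1 ≤ w k ∧ w k ≤ 2) (f : Hcube) :
    Ghomeo b w c hw f = G b w c f := rfl

lemma Ghomeo_symm_apply (hw : ∀ k, 1 ≤ w k ∧ w k ≤ 2) (g : Hcube) :
    (Ghomeo b w c hw).symm g = G' b w c g := rfl

lemma G_pseudo_iff (f : Hcube) : G b w c f ∈ pseudoInt ↔ f ∈ pseudoInt := by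
  unfold pseudoInt
  simp only [Set.mem_setOf_eq]
  apply forall_congr'
  intro n
  rcases hb : b n with _ | _
  · rw [G_coord_false b w c hb]
  · rw [G_coord_true b w c hb]
    exact phi_lt_one_iff (coord_abs_le f n) _

/-- closeness implies same KF membership -/
lemma KF_of_close {F : Filter ℕ} (hfree : F ≤ Filter.cofinite)
    (hc1 : ∀ n, 0 ≤ c n) (hc2 : ∀ n, c n ≤ (1/2:ℝ)^n)
    {g h : Hcube} (hclose : ∀ n, |g.val n - h.val n| ≤ 4 * c n)
    (hh : h ∈ KF F) : g ∈ KF F := by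
  intro m
  have h1 : {n | |h.val n| < (1/2:ℝ)^(m+1)} ∈ F := hh (m+1)
  have h2 : {n : ℕ | m + 4 ≤ n} ∈ F := by
    apply hfree
    rw [Filter.mem_cofinite]
    have : {n : ℕ | m + 4 ≤ n}ᶜ = {n : ℕ | n < m + 4} := by
      ext n; simp [Nat.not_le]
    rw [this]
    exact Set.finite_lt_nat (m+4)
  filter_upwards [h1, h2] with n hn1 hn2
  have hpow : (1/2:ℝ)^n ≤ (1/2:ℝ)^(m+4) :=
    pow_le_pow_of_le_one (by norm_num) (by norm_num) hn2
  have hkey : |g.val n| ≤ |h.val n| + 4 * c n := by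
    calc |g.val n| = |h.val n + (g.val n - h.val n)| := by ring_nf
      _ ≤ |h.val n| + |g.val n - h.val n| := abs_add_le _ _
      _ ≤ |h.val n| + 4 * c n := by linarith [hclose n]
  have hm : (0:ℝ) < (1/2:ℝ)^m := by positivity
  have e1 : (1/2:ℝ)^(m+1) = (1/2:ℝ)^m * (1/2) := by rw [pow_succ]
  have e2 : (1/2:ℝ)^(m+4) = (1/2:ℝ)^m * (1/16) := by
    rw [pow_add]; norm_num
  calc |g.val n| ≤ |h.val n| + 4 * c n := hkey
    _ < (1/2:ℝ)^(m+1) + 4 * (1/2:ℝ)^n := by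
        have := hc2 n; nlinarith [hclose n]
    _ ≤ (1/2:ℝ)^(m+1) + 4 * (1/2:ℝ)^(m+4) := by linarith
    _ < (1/2:ℝ)^m := by rw [e1, e2]; linarith

lemma G_close (hw : ∀ k, 1 ≤ w k ∧ w k ≤ 2) (hc1 : ∀ n, 0 ≤ c n) (f : Hcube) (n : ℕ) :
    |(G b w c f).val n - f.val n| ≤ 4 * c n := by
  rcases hb : b n with _ | _
  · rw [G_coord_false b w c hb]
    simp only [sub_self, abs_zero]
    have := hc1 n; linarith
  · rw [G_coord_true b w c hb]
    calc |phi (c n * sigma b w f) (f.val n) - f.val n| ≤ |c n * sigma b w f| :=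
          phi_sub_abs (coord_abs_le f n) _
      _ = c n * |sigma b w f| := by rw [abs_mul, abs_of_nonneg (hc1 n)]
      _ ≤ c n * 4 := mul_le_mul_of_nonneg_left (sigma_abs_le b hw f) (hc1 n)
      _ = 4 * c n := by ring

lemma G'_close (hw : ∀ k, 1 ≤ w k ∧ w k ≤ 2) (hc1 : ∀ n, 0 ≤ c n) (g : Hcube) (n : ℕ) :
    |(G' b w c g).val n - g.val n| ≤ 4 * c n := by
  rcases hb : b n with _ | _
  · rw [G'_coord_false b w c hb]
    simp only [sub_self, abs_zero]
    have := hc1 n; linarith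
  · rw [G'_coord_true b w c hb]
    calc |psi (c n * sigma b w g) (g.val n) - g.val n| ≤ |c n * sigma b w g| :=
          psi_sub_abs (coord_abs_le g n) _
      _ = c n * |sigma b w g| := by rw [abs_mul, abs_of_nonneg (hc1 n)]
      _ ≤ c n * 4 := mul_le_mul_of_nonneg_left (sigma_abs_le b hw g) (hc1 n)
      _ = 4 * c n := by ring

lemma G_pattern {x y : Hcube} (hagree : ∀ k, b k = false → x.val k = y.val k) (n : ℕ) :
    ((G b w c x).val n = (G b w c y).val n ↔ x.val n = y.val n) := by
  rcases hb : b n with _ | _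
  · rw [G_coord_false b w c hb, G_coord_false b w c hb]
  · rw [G_coord_true b w c hb, G_coord_true b w c hb, sigma_congr b hagree]
    exact ⟨phi_inj _, fun h => by rw [h]⟩

end Skew

section Choice

variable (b : ℕ → Bool)

/-- choice of the weights by the Baire category theorem -/
lemma exists_w (E : Set Hcube) (hE : E.Countable) :
    ∃ w : ℕ → ℝ, (∀ k, 1 ≤ w k ∧ w k ≤ 2) ∧
      ∀ x ∈ E, ∀ y ∈ E, (∃ k, b k = false ∧ x.val k ≠ y.val k) →
        sigma b w x ≠ sigma b w y := by
  classical
  set X := ℕ → ↥(Set.Icc (1:ℝ) 2) with hX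
  set Sset : Set (Hcube × Hcube) :=
    {p | p.1 ∈ E ∧ p.2 ∈ E ∧ ∃ k, b k = false ∧ p.1.val k ≠ p.2.val k} with hSset
  have hSc : Sset.Countable :=
    (hE.prod hE).mono (fun p hp => Set.mem_prod.mpr ⟨hp.1, hp.2.1⟩)
  haveI : Countable ↥Sset := hSc.to_subtype
  set a : Hcube × Hcube → ℕ → ℝ :=
    fun p k => if b k = true then 0 else (1/2:ℝ)^k * (p.1.val k - p.2.val k) with ha
  set L : Hcube × Hcube → X → ℝ := fun p v => ∑' k, a p k * (v k : ℝ) with hL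
  have habound : ∀ p k, |a p k| ≤ (1/2:ℝ)^k * 2 := by
    intro p k
    have hp : (0:ℝ) ≤ (1/2:ℝ)^k := by positivity
    rw [ha]
    dsimp only
    split_ifs with hb
    · simp only [abs_zero]; positivity
    · rw [abs_mul, abs_of_nonneg hp]
      have h1 := coord_abs_le p.1 k
      have h2 := coord_abs_le p.2 k
      have : |p.1.val k - p.2.val k| ≤ 2 := by
        calc |p.1.val k - p.2.val k| ≤ |p.1.val k| + |p.2.val k| := abs_sub _ _
          _ ≤ 2 := by linarith
      nlinarith
  have hvbound : ∀ (v : X) (k : ℕ), |(v k : ℝ)| ≤ 2 := by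
    intro v k
    have := (v k).2
    rw [Set.mem_Icc] at this
    rw [abs_le]; exact ⟨by linarith [this.1], this.2⟩
  have htermb : ∀ (p : Hcube × Hcube) (k : ℕ) (v : X),
      ‖a p k * (v k : ℝ)‖ ≤ (1/2:ℝ)^k * 4 := by
    intro p k v
    rw [Real.norm_eq_abs, abs_mul]
    have h1 := habound p k
    have h2 := hvbound v k
    have hp : (0:ℝ) ≤ (1/2:ℝ)^k := by positivity
    nlinarith [abs_nonneg (a p k), abs_nonneg ((v k : ℝ))]
  have hsumfour : Summable (fun k : ℕ => (1/2:ℝ)^k * 4) :=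
    (summable_geometric_of_lt_one (by norm_num) (by norm_num)).mul_right 4
  have hsummand : ∀ (p : Hcube × Hcube) (v : X),
      Summable (fun k => a p k * (v k : ℝ)) := by
    intro p v
    exact Summable.of_norm_bounded hsumfour (fun k => htermb p k v)
  have hLc : ∀ p, Continuous (L p) := by
    intro p
    apply continuous_tsum _ hsumfour
    · intro k v; exact htermb p k v
    · intro k
      exact continuous_const.mul (continuous_subtype_val.comp (continuous_apply k))
  have hopen : ∀ p, IsOpen {v : X | L p v ≠ 0} :=
    fun p => IsOpen.preimage (hLc p) isOpen_ne
  have hdense : ∀ p ∈ Sset, Dense {v : X | L p v ≠ 0} := by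
    intro p hp
    intro v
    by_cases h0 : L p v = 0
    swap
    · exact subset_closure h0
    obtain ⟨k0, hbk0, hne⟩ := hp.2.2
    have hak0 : a p k0 ≠ 0 := by
      rw [ha]; dsimp only
      rw [if_neg (by rw [hbk0]; simp)]
      exact mul_ne_zero (by positivity) (sub_ne_zero.mpr hne)
    set v0 : ℝ := (v k0 : ℝ) with hv0def
    have hv0 : 1 ≤ v0 ∧ v0 ≤ 2 := by
      have := (v k0).2; rw [Set.mem_Icc] at this; exact this
    set η : ℝ := if v0 ≤ 3/2 then 1/2 else -(1/2) with hη
    have hηne : η ≠ 0 := by rw [hη]; split_ifs <;> norm_num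
    have hmem : ∀ j : ℕ, v0 + η/(j+1) ∈ Set.Icc (1:ℝ) 2 := by
      intro j
      have hj0 : (0:ℝ) < (j:ℝ)+1 := by positivity
      rw [Set.mem_Icc]
      rw [hη]
      split_ifs with hcase
      · have h1 : (1/2:ℝ)/((j:ℝ)+1) ≤ 1/2 := by
          rw [div_le_iff₀ hj0]; nlinarith
        have h2 : (0:ℝ) < (1/2:ℝ)/((j:ℝ)+1) := by positivity
        constructor <;> nlinarith [hv0.1, hv0.2]
      · push_neg at hcase
        have h1 : (1/2:ℝ)/((j:ℝ)+1) ≤ 1/2 := by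
          rw [div_le_iff₀ hj0]; nlinarith
        have h2 : (0:ℝ) < (1/2:ℝ)/((j:ℝ)+1) := by positivity
        constructor
        · have : -(1/2:ℝ)/((j:ℝ)+1) = -((1/2:ℝ)/((j:ℝ)+1)) := by ring
          rw [this]; nlinarith
        · have : -(1/2:ℝ)/((j:ℝ)+1) = -((1/2:ℝ)/((j:ℝ)+1)) := by ring
          rw [this]; nlinarith [hv0.2]
    set seq : ℕ → X := fun j => Function.update v k0 ⟨v0 + η/(j+1), hmem j⟩ with hseq
    apply mem_closure_iff_seq_limit.mpr
    refine ⟨seq, ?_, ?_⟩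
    · intro j
      show L p (seq j) ≠ 0
      have hrw : (fun k => a p k * ((seq j k : ℝ)))
          = fun k => a p k * (v k : ℝ) + (if k = k0 then a p k0 * (η/((j:ℝ)+1)) else 0) := by
        funext k
        by_cases hk : k = k0
        · subst hk
          rw [hseq]
          simp only [Function.update_self, if_pos rfl]
          push_cast
          ring
        · rw [hseq]
          simp only [Function.update_of_ne hk, if_neg hk, add_zero]
      have hsum2 : Summable (fun k : ℕ => (if k = k0 then a p k0 * (η/((j:ℝ)+1)) else 0)) :=
        (hasSum_ite_eq k0 _).summable
      have : L p (seq j) = L p v + a p k0 * (η/((j:ℝ)+1)) := by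
        rw [hL]
        dsimp only
        rw [hrw, Summable.tsum_add (hsummand p v) hsum2, tsum_ite_eq]
      rw [this, h0, zero_add]
      have hj0 : ((j:ℝ)+1) ≠ 0 := by positivity
      exact mul_ne_zero hak0 (div_ne_zero hηne hj0)
    · rw [tendsto_pi_nhds]
      intro k
      by_cases hk : k = k0
      · subst hk
        rw [tendsto_subtype_rng]
        have h1 : Filter.Tendsto (fun j : ℕ => η * (1/((j:ℝ)+1))) Filter.atTop (nhds 0) := by
          have := tendsto_one_div_add_atTop_nhds_zero_nat.const_mul η
          simpa using this
        have h2 : Filter.Tendsto (fun j : ℕ => v0 + η/((j:ℝ)+1)) Filter.atTop (nhds v0) := by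
          have : (fun j : ℕ => v0 + η/((j:ℝ)+1)) = fun j : ℕ => v0 + η * (1/((j:ℝ)+1)) := by
            funext j; ring
          rw [this]
          simpa using tendsto_const_nhds.add h1
        convert h2 using 2 with j
        rw [hseq]; simp only [Function.update_self]
      · have : (fun j : ℕ => seq j k) = fun _ => v k := by
          funext j; rw [hseq]; simp only [Function.update_of_ne hk]
        rw [this]
        exact tendsto_const_nhds
  haveI : Nonempty X := ⟨fun _ => ⟨1, by norm_num⟩⟩
  have hd : Dense (⋂ p : ↥Sset, {v : X | L p.1 v ≠ 0}) :=
    dense_iInter_of_isOpen (fun p => hopen p.1) (fun p => hdense p.1 p.2)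
  obtain ⟨v, hv⟩ := hd.nonempty
  refine ⟨fun k => (v k : ℝ), ?_, ?_⟩
  · intro k
    have := (v k).2; rw [Set.mem_Icc] at this; exact this
  · intro x hx y hy hxy
    have hw : ∀ k, 1 ≤ (v k : ℝ) ∧ (v k : ℝ) ≤ 2 := by
      intro k; have := (v k).2; rw [Set.mem_Icc] at this; exact this
    have hpmem : (x, y) ∈ Sset := ⟨hx, hy, hxy⟩
    have hLne : L (x, y) v ≠ 0 := by
      have := Set.mem_iInter.mp hv ⟨(x, y), hpmem⟩
      exact this
    have hdiff : sigma b (fun k => (v k : ℝ)) x - sigma b (fun k => (v k : ℝ)) y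
        = L (x, y) v := by
      rw [hL]
      dsimp only
      unfold sigma
      rw [← Summable.tsum_sub (sigma_summable b hw x) (sigma_summable b hw y)]
      apply tsum_congr
      intro k
      rw [ha]
      dsimp only
      split_ifs with hb
      · simp
      · ring
    intro heq
    rw [heq, sub_self] at hdiff
    exact hLne hdiff.symm

/-- choice of the scalars -/
lemma exists_c {w : ℕ → ℝ} (E : Set Hcube) (hE : E.Countable) (hEsub : E ⊆ pseudoInt)
    (hsep : ∀ x ∈ E, ∀ y ∈ E, (∃ k, b k = false ∧ x.val k ≠ y.val k) →
        sigma b w x ≠ sigma b w y) (n : ℕ) :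
    ∃ t : ℝ, 0 < t ∧ t ≤ (1/2:ℝ)^n ∧ t ≤ 1/32 ∧
      ∀ x ∈ E, ∀ y ∈ E, (∃ k, b k = false ∧ x.val k ≠ y.val k) →
        t * (sigma b w x * (1 - |x.val n|) - sigma b w y * (1 - |y.val n|))
          ≠ y.val n - x.val n := by
  classical
  set Sset : Set (Hcube × Hcube) :=
    {p | p.1 ∈ E ∧ p.2 ∈ E ∧ ∃ k, b k = false ∧ p.1.val k ≠ p.2.val k} with hSset
  have hSc : Sset.Countable :=
    (hE.prod hE).mono (fun p hp => Set.mem_prod.mpr ⟨hp.1, hp.2.1⟩)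
  set A : Hcube × Hcube → ℝ := fun p =>
    sigma b w p.1 * (1 - |p.1.val n|) - sigma b w p.2 * (1 - |p.2.val n|) with hA
  set B : Hcube × Hcube → ℝ := fun p => p.2.val n - p.1.val n with hB
  set Bad : Set ℝ := ⋃ p ∈ Sset, {t : ℝ | t * A p = B p} with hBad
  have hBadc : Bad.Countable := by
    rw [hBad]
    apply Set.Countable.biUnion hSc
    intro p hp
    by_cases hA0 : A p = 0
    · have hB0 : B p ≠ 0 := by
        intro hB0
        apply hsep p.1 hp.1 p.2 hp.2.1 hp.2.2
        have hxy : p.1.val n = p.2.val n := by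
          rw [hB] at hB0; dsimp only at hB0; linarith [hB0]
        rw [hA] at hA0; dsimp only at hA0
        rw [hxy] at hA0
        have hlt : |p.2.val n| < 1 := hEsub hp.2.1 n
        have : (sigma b w p.1 - sigma b w p.2) * (1 - |p.2.val n|) = 0 := by
          linarith [hA0]
        rcases mul_eq_zero.mp this with h | h
        · linarith [sub_eq_zero.mp h, h]
        · linarith
      have : {t : ℝ | t * A p = B p} = ∅ := by
        ext t; simp only [Set.mem_setOf_eq, Set.mem_empty_iff_false, iff_false]
        rw [hA0, mul_zero]
        exact fun h => hB0 h.symm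
      rw [this]; exact Set.countable_empty
    · apply Set.Subsingleton.countable
      intro t1 h1 t2 h2
      simp only [Set.mem_setOf_eq] at h1 h2
      have : t1 * A p = t2 * A p := by rw [h1, h2]
      exact mul_right_cancel₀ hA0 this
  set m : ℝ := min ((1/2:ℝ)^n) (1/32) with hm
  have hm0 : 0 < m := by
    rw [hm]; apply lt_min (by positivity) (by norm_num)
  have hnotsub : ¬ (Set.Ioo (0:ℝ) m ⊆ Bad) := by
    intro hsub
    have h1 : MeasureTheory.volume Bad = 0 := hBadc.measure_zero _
    have h2 : MeasureTheory.volume (Set.Ioo (0:ℝ) m) ≤ MeasureTheory.volume Bad :=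
      MeasureTheory.measure_mono hsub
    rw [h1, Real.volume_Ioo] at h2
    simp only [nonpos_iff_eq_zero, ENNReal.ofReal_eq_zero] at h2
    linarith
  obtain ⟨t, htIoo, htBad⟩ := Set.not_subset.mp hnotsub
  rw [Set.mem_Ioo] at htIoo
  refine ⟨t, htIoo.1, ?_, ?_, ?_⟩
  · exact htIoo.2.le.trans (by rw [hm]; exact min_le_left _ _)
  · exact htIoo.2.le.trans (by rw [hm]; exact min_le_right _ _)
  · intro x hx y hy hxy heq
    apply htBad
    rw [hBad]
    apply Set.mem_biUnion (show ((x,y) : Hcube × Hcube) ∈ Sset from ⟨hx, hy, hxy⟩)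
    simpa [hA, hB] using heq

end Choice

/-- one stage: a skew homeomorphism fixing the coordinates where `b` is `false`,
preserving the pseudointerior and `K_F`, and putting the pairs of `E` that differ
somewhere on the `false` coordinates in general position on the `true` coordinates. -/
lemma stage (F : Filter ℕ) (hfree : F ≤ Filter.cofinite) (b : ℕ → Bool)
    (E : Set Hcube) (hE : E.Countable) (hEsub : E ⊆ pseudoInt) :
    ∃ H : Hcube ≃ₜ Hcube,
      (∀ f : Hcube, ∀ n, b n = false → (H f).val n = f.val n) ∧
      H '' pseudoInt = pseudoInt ∧
      H '' KF F = KF F ∧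
      (∀ x ∈ E, ∀ y ∈ E, (∃ k, b k = false ∧ x.val k ≠ y.val k) →
        ∀ n, b n = true → (H x).val n ≠ (H y).val n) ∧
      (∀ x y : Hcube, (∀ k, b k = false → x.val k = y.val k) →
        ∀ n, ((H x).val n = (H y).val n ↔ x.val n = y.val n)) := by
  classical
  obtain ⟨w, hw, hsep⟩ := exists_w b E hE
  choose c hc1 hc2 hc3 hc4 using exists_c b E hE hEsub hsep
  refine ⟨Ghomeo b w c hw, ?_, ?_, ?_, ?_, ?_⟩
  · intro f n hb
    exact G_coord_false b w c hb f
  · ext g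
    constructor
    · rintro ⟨f, hf, rfl⟩
      exact (G_pseudo_iff b w c f).mpr hf
    · intro hg
      refine ⟨G' b w c g, ?_, G_G' b w c g⟩
      apply (G_pseudo_iff b w c (G' b w c g)).mp
      rw [G_G' b w c g]
      exact hg
  · ext g
    constructor
    · rintro ⟨f, hf, rfl⟩
      exact KF_of_close c hfree (fun n => (hc1 n).le) hc2
        (fun n => G_close b w c hw (fun n => (hc1 n).le) f n) hf
    · intro hg
      refine ⟨G' b w c g, ?_, G_G' b w c g⟩
      exact KF_of_close c hfree (fun n => (hc1 n).le) hc2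
        (fun n => G'_close b w c hw (fun n => (hc1 n).le) g n) hg
  · intro x hx y hy hxy n hbn heq
    have hclampx : |c n * sigma b w x| ≤ 1/2 := by
      rw [abs_mul, abs_of_nonneg (hc1 n).le]
      have := sigma_abs_le b hw x
      nlinarith [hc3 n, (hc1 n).le, abs_nonneg (sigma b w x)]
    have hclampy : |c n * sigma b w y| ≤ 1/2 := by
      rw [abs_mul, abs_of_nonneg (hc1 n).le]
      have := sigma_abs_le b hw y
      nlinarith [hc3 n, (hc1 n).le, abs_nonneg (sigma b w y)]
    rw [Ghomeo_apply b w c hw, Ghomeo_apply b w c hw,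
      G_coord_true b w c hbn, G_coord_true b w c hbn] at heq
    unfold phi at heq
    rw [clamp_eq_self hclampx, clamp_eq_self hclampy] at heq
    apply hc4 n x hx y hy hxy
    linear_combination heq
  · intro x y hagree n
    exact G_pattern b w c hagree n

end

end GPaux

open GPaux in
/-- For a free filter `F` on `ℕ` and a countable set `D ⊆ (-1,1)^ℕ`, there is a
homeomorphism `h` of the Hilbert cube such that `h[D]` is in general position,
`h[(-1,1)^ℕ] = (-1,1)^ℕ` and `h[K_F] = K_F`. -/
theorem exists_homeomorph_general_position (F : Filter ℕ) (hproper : F.NeBot)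
    (hfree : F ≤ Filter.cofinite) (D : Set Hcube) (hDsub : D ⊆ pseudoInt)
    (hDc : D.Countable) :
    ∃ h : Hcube ≃ₜ Hcube, GenPos (h '' D) ∧ h '' pseudoInt = pseudoInt ∧
      h '' KF F = KF F := by
  classical
  -- parity indicators: `bO` is true on odd coordinates, `bE` on even ones
  set bO : ℕ → Bool := fun n => decide (n % 2 = 1) with hbO
  set bE : ℕ → Bool := fun n => decide (n % 2 = 0) with hbE
  have hbOt : ∀ n, bO n = true ↔ n % 2 = 1 := by intro n; rw [hbO]; simp
  have hbOf : ∀ n, bO n = false ↔ n % 2 = 0 := by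
    intro n; rw [hbO]; simp only [decide_eq_false_iff_not]; omega
  have hbEt : ∀ n, bE n = true ↔ n % 2 = 0 := by intro n; rw [hbE]; simp
  have hbEf : ∀ n, bE n = false ↔ n % 2 = 1 := by
    intro n; rw [hbE]; simp only [decide_eq_false_iff_not]; omega
  -- stage A : fixes evens, shuffles odds
  obtain ⟨H₁, hfix₁, hps₁, hKF₁, hsep₁, hpat₁⟩ := stage F hfree bO D hDc hDsub
  set E₂ : Set Hcube := H₁ '' D with hE₂
  have hE₂c : E₂.Countable := hDc.image _
  have hE₂sub : E₂ ⊆ pseudoInt := by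
    rw [hE₂, ← hps₁]; exact Set.image_mono hDsub
  -- stage B : fixes odds, shuffles evens
  obtain ⟨H₂, hfix₂, hps₂, hKF₂, hsep₂, hpat₂⟩ := stage F hfree bE E₂ hE₂c hE₂sub
  set E₃ : Set Hcube := H₂ '' E₂ with hE₃
  have hE₃c : E₃.Countable := hE₂c.image _
  have hE₃sub : E₃ ⊆ pseudoInt := by
    rw [hE₃, ← hps₂]; exact Set.image_mono hE₂sub
  -- stage C : fixes evens, shuffles odds
  obtain ⟨H₃, hfix₃, hps₃, hKF₃, hsep₃, hpat₃⟩ := stage F hfree bO E₃ hE₃c hE₃sub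
  refine ⟨(H₁.trans H₂).trans H₃, ?_, ?_, ?_⟩
  · -- general position
    rintro a ⟨x, hxD, rfl⟩ bb ⟨y, hyD, rfl⟩ hne n
    have hxyne : x ≠ y := fun h => hne (by rw [h])
    simp only [Homeomorph.trans_apply]
    -- after stage A the two points differ at some odd coordinate
    have claim1 : ∃ k, k % 2 = 1 ∧ (H₁ x).val k ≠ (H₁ y).val k := by
      by_cases hcase : ∃ k, k % 2 = 0 ∧ x.val k ≠ y.val k
      · obtain ⟨k, hk, hkne⟩ := hcase
        refine ⟨1, by norm_num, ?_⟩
        exact hsep₁ x hxD y hyD ⟨k, (hbOf k).mpr hk, hkne⟩ 1 ((hbOt 1).mpr (by norm_num))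
      · push_neg at hcase
        have hex : ∃ k, x.val k ≠ y.val k := by
          by_contra hno
          push_neg at hno
          exact hxyne (Subtype.ext (funext hno))
        obtain ⟨k, hkne⟩ := hex
        have hk1 : k % 2 = 1 := by
          rcases Nat.mod_two_eq_zero_or_one k with h | h
          · exact absurd hkne (not_not.mpr (hcase k h))
          · exact h
        refine ⟨k, hk1, ?_⟩
        intro heq
        apply hkne
        exact (hpat₁ x y (fun j hj => hcase j ((hbOf j).mp hj)) k).mp heq
    obtain ⟨k, hk1, hkne⟩ := claim1
    -- after stage B the two points differ at every even coordinate
    have claim2 : ∀ j, j % 2 = 0 → (H₂ (H₁ x)).val j ≠ (H₂ (H₁ y)).val j := by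
      intro j hj
      exact hsep₂ (H₁ x) ⟨x, hxD, rfl⟩ (H₁ y) ⟨y, hyD, rfl⟩
        ⟨k, (hbEf k).mpr hk1, hkne⟩ j ((hbEt j).mpr hj)
    -- after stage C they differ everywhere
    rcases Nat.mod_two_eq_zero_or_one n with hn | hn
    · -- even coordinate: fixed by stage C, already distinct after stage B
      rw [hfix₃ _ n ((hbOf n).mpr hn), hfix₃ _ n ((hbOf n).mpr hn)]
      exact claim2 n hn
    · -- odd coordinate: separated by stage C
      apply hsep₃ (H₂ (H₁ x)) ⟨H₁ x, ⟨x, hxD, rfl⟩, rfl⟩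
        (H₂ (H₁ y)) ⟨H₁ y, ⟨y, hyD, rfl⟩, rfl⟩
        ⟨0, (hbOf 0).mpr (by norm_num), claim2 0 (by norm_num)⟩ n ((hbOt n).mpr hn)
  · -- pseudointerior preserved
    have hco : ⇑((H₁.trans H₂).trans H₃) = ⇑H₃ ∘ ⇑H₂ ∘ ⇑H₁ := by
      funext f; simp [Homeomorph.trans_apply]
    rw [hco, Set.image_comp, Set.image_comp, hps₁, hps₂, hps₃]
  · -- K_F preserved
    have hco : ⇑((H₁.trans H₂).trans H₃) = ⇑H₃ ∘ ⇑H₂ ∘ ⇑H₁ := by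
      funext f; simp [Homeomorph.trans_apply]
    rw [hco, Set.image_comp, Set.image_comp, hKF₁, hKF₂, hKF₃]
end

section
/- Let F be a free filter on ℕ and let D, E ⊆ (-1,1)^ℕ be countable sets. Then there exists a homeomorphism h : Q → Q of the Hilbert cube such that h[C_F] = C_F, h[(-1,1)^ℕ] = (-1,1)^ℕ, and for all d ∈ D, e ∈ E and n ∈ ℕ, h(d)(n) ≠ e(n). -/
open Filter Topology Set

/-!
The homeomorphism acts on the `n`-th coordinate by `x ↦ x + tₙ (1 - x²)`, an increasing
self-map of `[-1, 1]` for `|tₙ| ≤ 1/2`. It fixes `±1`, hence preserves `(-1,1)^ℕ`, and moves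
each point by at most `|tₙ|`; with `tₙ → 0` it therefore preserves `F`-convergence to `0`,
i.e. `K_F`, since `F` refines the cofinite filter. For `|d n| < 1` the equation
`h(d)(n) = e(n)` determines `tₙ`, so only countably many values of `tₙ` are forbidden and
`tₙ` can avoid all of them.
-/

instance : CompactSpace Hcube :=
  (isCompact_iff_compactSpace (s := {f : ℕ → ℝ | ∀ n, f n ∈ Icc (-1) 1})).mp <| by
    simpa only [Set.pi, mem_univ, true_imp_iff] using
      isCompact_univ_pi fun _ : ℕ => isCompact_Icc (a := (-1 : ℝ)) (b := 1)

namespace Hcube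

def mapCoords (φ : ℕ → ℝ → ℝ) (hφ : ∀ n, MapsTo (φ n) (Icc (-1) 1) (Icc (-1) 1)) :
    Hcube → Hcube :=
  fun f => ⟨fun n => φ n (f.val n), fun n => hφ n (f.property n)⟩

theorem continuous_mapCoords (φ : ℕ → ℝ → ℝ) (hφ : ∀ n, MapsTo (φ n) (Icc (-1) 1) (Icc (-1) 1))
    (hcont : ∀ n, Continuous (φ n)) : Continuous (mapCoords φ hφ) :=
  .subtype_mk (continuous_pi fun n =>
    (hcont n).comp ((continuous_apply n).comp continuous_subtype_val)) _

theorem bijective_mapCoords (φ : ℕ → ℝ → ℝ) (hφ : ∀ n, BijOn (φ n) (Icc (-1) 1) (Icc (-1) 1)) :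
    Function.Bijective (mapCoords φ fun n => (hφ n).mapsTo) := by
  refine ⟨fun f g hfg => Subtype.ext <| funext fun n => ?_, fun g => ?_⟩
  · exact (hφ n).injOn (f.property n) (g.property n) (congrFun (congrArg Subtype.val hfg) n)
  · choose x hx hxg using fun n => (hφ n).surjOn (g.property n)
    exact ⟨⟨x, hx⟩, Subtype.ext (funext hxg)⟩

noncomputable def coordHomeomorph (φ : ℕ → ℝ → ℝ) (hcont : ∀ n, Continuous (φ n))
    (hφ : ∀ n, BijOn (φ n) (Icc (-1) 1) (Icc (-1) 1)) : Hcube ≃ₜ Hcube :=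
  (continuous_mapCoords φ (fun n => (hφ n).mapsTo) hcont).homeoOfEquivCompactToT2
    (f := Equiv.ofBijective _ (bijective_mapCoords φ hφ))

@[simp]
theorem coordHomeomorph_apply (φ : ℕ → ℝ → ℝ) (hcont : ∀ n, Continuous (φ n))
    (hφ : ∀ n, BijOn (φ n) (Icc (-1) 1) (Icc (-1) 1)) (f : Hcube) (n : ℕ) :
    (coordHomeomorph φ hcont hφ f).val n = φ n (f.val n) :=
  rfl

end Hcube

theorem Function.Surjective.image_eq_self_of_forall_mem_iff {α : Type*} {f : α → α}
    (hf : f.Surjective) {s : Set α} (hs : ∀ x, f x ∈ s ↔ x ∈ s) : f '' s = s := by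
  calc f '' s = f '' (f ⁻¹' s) := by rw [show f ⁻¹' s = s from Set.ext hs]
    _ = s := image_preimage_eq s hf

def quadShift (t x : ℝ) : ℝ := x + t * (1 - x ^ 2)

@[simp] theorem quadShift_neg_one (t : ℝ) : quadShift t (-1) = -1 := by simp [quadShift]

@[simp] theorem quadShift_one (t : ℝ) : quadShift t 1 = 1 := by simp [quadShift]

@[fun_prop]
theorem continuous_quadShift (t : ℝ) : Continuous (quadShift t) := by
  unfold quadShift; fun_prop

theorem strictMonoOn_quadShift {t : ℝ} (ht : |t| ≤ 1 / 2) :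
    StrictMonoOn (quadShift t) (Icc (-1) 1) := by
  rintro x ⟨hx₁, hx₂⟩ y ⟨hy₁, hy₂⟩ hxy
  have hsum : |t * (x + y)| < 1 := by
    rw [abs_mul]
    have : |x + y| < 2 := abs_lt.2 ⟨by linarith, by linarith⟩
    nlinarith [abs_nonneg t, abs_nonneg (x + y)]
  have hdiff : quadShift t y - quadShift t x = (y - x) * (1 - t * (x + y)) := by
    unfold quadShift; ring
  nlinarith [mul_pos (sub_pos.2 hxy) (sub_pos.2 (abs_lt.1 hsum).2)]

theorem bijOn_quadShift {t : ℝ} (ht : |t| ≤ 1 / 2) :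
    BijOn (quadShift t) (Icc (-1) 1) (Icc (-1) 1) := by
  have hmono := strictMonoOn_quadShift ht
  refine ⟨fun x hx => ?_, hmono.injOn, ?_⟩
  · simpa using And.intro (hmono.monotoneOn (left_mem_Icc.2 (by norm_num)) hx hx.1)
      (hmono.monotoneOn hx (right_mem_Icc.2 (by norm_num)) hx.2)
  · have := intermediate_value_Icc (by norm_num : (-1 : ℝ) ≤ 1)
      (continuous_quadShift t).continuousOn
    rwa [quadShift_neg_one, quadShift_one] at this

theorem abs_quadShift_lt_one_iff {t x : ℝ} (ht : |t| ≤ 1 / 2) (hx : x ∈ Icc (-1) 1) :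
    |quadShift t x| < 1 ↔ |x| < 1 := by
  have hmono := strictMonoOn_quadShift ht
  have hlo := hmono.lt_iff_lt (left_mem_Icc.2 (by norm_num : (-1 : ℝ) ≤ 1)) hx
  have hhi := hmono.lt_iff_lt hx (right_mem_Icc.2 (by norm_num : (-1 : ℝ) ≤ 1))
  simp only [quadShift_neg_one, quadShift_one] at hlo hhi
  rw [abs_lt, abs_lt, hlo, hhi]

theorem abs_quadShift_sub_le {t x : ℝ} (hx : x ∈ Icc (-1) 1) : |quadShift t x - x| ≤ |t| := by
  have h : 0 ≤ 1 - x ^ 2 := by nlinarith [hx.1, hx.2]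
  have h' : 1 - x ^ 2 ≤ 1 := by nlinarith
  rw [quadShift, add_sub_cancel_left, abs_mul, abs_of_nonneg h]
  exact mul_le_of_le_one_right (abs_nonneg t) h'

theorem quadShift_eq_iff {t x y : ℝ} (hx : |x| < 1) :
    quadShift t x = y ↔ t = (y - x) / (1 - x ^ 2) := by
  have hx2 : 1 - x ^ 2 ≠ 0 := by
    nlinarith [sq_lt_one_iff_abs_lt_one x |>.2 hx]
  rw [eq_div_iff hx2, quadShift]
  constructor <;> intro h <;> linarith

theorem exists_seq_tendsto_zero_notMem (B : ℕ → Set ℝ) (hB : ∀ n, (B n).Countable) :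
    ∃ t : ℕ → ℝ, (∀ n, |t n| ≤ 1 / 2) ∧ (∀ n, t n ∉ B n) ∧ Tendsto t atTop (𝓝 0) := by
  have hpos : ∀ n : ℕ, (0 : ℝ) < (1 / 2) ^ (n + 1) := fun n => by positivity
  choose t htB ht using fun n => ((hB n).dense_compl ℝ).exists_between (hpos n)
  have hle : ∀ n, (1 / 2 : ℝ) ^ (n + 1) ≤ 1 / 2 := fun n =>
    pow_le_of_le_one (by norm_num) (by norm_num) n.succ_ne_zero
  refine ⟨t, fun n => abs_le.2 ⟨by linarith [(ht n).1], (ht n).2.le.trans (hle n)⟩, htB,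
    tendsto_of_tendsto_of_tendsto_of_le_of_le tendsto_const_nhds ?_ (fun n => (ht n).1.le)
      (fun n => (ht n).2.le)⟩
  exact (tendsto_pow_atTop_nhds_zero_of_lt_one (by norm_num : (0 : ℝ) ≤ 1 / 2)
    (by norm_num)).comp (tendsto_add_atTop_nat 1)

theorem mem_KF_iff_tendsto {F : Filter ℕ} {f : Hcube} : f ∈ KF F ↔ Tendsto f.val F (𝓝 0) := by
  rw [Metric.tendsto_nhds]
  refine ⟨fun hf ε hε => ?_, fun hf m => ?_⟩
  · obtain ⟨m, hm⟩ := exists_pow_lt_of_lt_one hε (by norm_num : (1 / 2 : ℝ) < 1)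
    filter_upwards [hf m] with n hn
    simpa only [Real.dist_eq, sub_zero] using hn.trans hm
  · filter_upwards [hf _ (by positivity : (0 : ℝ) < (1 / 2) ^ m)] with n hn
    simpa only [Real.dist_eq, sub_zero] using hn

theorem mem_KF_iff_of_tendsto_sub {F : Filter ℕ} {f g : Hcube}
    (h : Tendsto (fun n => g.val n - f.val n) F (𝓝 0)) : g ∈ KF F ↔ f ∈ KF F := by
  rw [mem_KF_iff_tendsto, mem_KF_iff_tendsto]
  constructor <;> intro hconv
  · simpa using hconv.sub h
  · simpa using hconv.add h

theorem exists_homeomorph_missing_countable_general (F : Filter ℕ)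
    (hfree : F ≤ Filter.cofinite) (D E : Set Hcube)
    (hDsub : D ⊆ pseudoInt)
    (hDc : D.Countable) (hEc : E.Countable) :
    ∃ h : Hcube ≃ₜ Hcube, h '' CF F = CF F ∧ h '' pseudoInt = pseudoInt ∧
      ∀ d ∈ D, ∀ e ∈ E, ∀ n : ℕ, (h d).val n ≠ e.val n := by
  -- `h d n = e n` pins the parameter at coordinate `n` to the value below.
  let B : ℕ → Set ℝ := fun n =>
    (fun p : Hcube × Hcube => (p.2.val n - p.1.val n) / (1 - p.1.val n ^ 2)) '' D ×ˢ E
  obtain ⟨t, ht, htB, htlim⟩ := exists_seq_tendsto_zero_notMem B fun n => (hDc.prod hEc).image _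
  let h := Hcube.coordHomeomorph (fun n => quadShift (t n)) (fun n => continuous_quadShift _)
    (fun n => bijOn_quadShift (ht n))
  have hP (f : Hcube) : h f ∈ pseudoInt ↔ f ∈ pseudoInt :=
    forall_congr' fun n => abs_quadShift_lt_one_iff (ht n) (f.property n)
  have hK (f : Hcube) : h f ∈ KF F ↔ f ∈ KF F :=
    mem_KF_iff_of_tendsto_sub <| squeeze_zero_norm (fun n => abs_quadShift_sub_le (f.property n))
      ((tendsto_zero_iff_norm_tendsto_zero.1 htlim).mono_left
        (hfree.trans Nat.cofinite_eq_atTop.le))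
  refine ⟨h, h.surjective.image_eq_self_of_forall_mem_iff fun f => and_congr (hK f) (hP f),
    h.surjective.image_eq_self_of_forall_mem_iff hP, ?_⟩
  rintro d hd e he n hde
  exact htB n ⟨(d, e), ⟨hd, he⟩, ((quadShift_eq_iff (hDsub hd n)).1 hde).symm⟩

/-- For a free filter `F` on `ℕ` and countable sets `D, E ⊆ (-1,1)^ℕ`, there is a
homeomorphism `h` of the Hilbert cube such that `h[C_F] = C_F`,
`h[(-1,1)^ℕ] = (-1,1)^ℕ` and `h(d)(n) ≠ e(n)` for all `d ∈ D`, `e ∈ E` and `n`. -/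
theorem exists_homeomorph_missing_countable (F : Filter ℕ) (hproper : F.NeBot)
    (hfree : F ≤ Filter.cofinite) (D E : Set Hcube)
    (hDsub : D ⊆ pseudoInt) (hEsub : E ⊆ pseudoInt)
    (hDc : D.Countable) (hEc : E.Countable) :
    ∃ h : Hcube ≃ₜ Hcube, h '' CF F = CF F ∧ h '' pseudoInt = pseudoInt ∧
      ∀ d ∈ D, ∀ e ∈ E, ∀ n : ℕ, (h d).val n ≠ e.val n :=
  exists_homeomorph_missing_countable_general F hfree D E hDsub hDc hEc
end
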